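/- arXiv:2605.11944 — 6 statements merged into one kernel-verified Lean document; each statement's English description precedes it below -/
import Mathlib

section
/- Let X and Y be measurable spaces, let μ and ν be probability measures on X and Y respectively, and let π be a probability measure on X × Y with marginals μ and ν whose density with respect to μ ⊗ ν is bounded below by a constant α > 0. Define the conditional expectation operators (T b)(x) := E_π[b(Y) | X = x] and (S a)(y) := E_π[a(X) | Y = y]. If (a, b) and (a', b') are two pairs of bounded measurable functions (a, a' : X → ℝ, b, b' : Y → ℝ) that both satisfy the linear system a + T b = ζ μ-almost everywhere and b + S a = η ν-almost everywhere, for the same bounded measurable data ζ : X → ℝ and η : Y → ℝ, then there exists a constant c ∈ ℝ such that a' = a + c μ-almost everywhere and b' = b − c ν-almost everywhere. -/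
open MeasureTheory ProbabilityTheory
open scoped ENNReal

private lemma intg_bdd {α : Type*} [MeasurableSpace α] (μ : Measure α) [IsFiniteMeasure μ]
    {f : α → ℝ} (hf : Measurable f) {C : ℝ} (h : ∀ x, |f x| ≤ C) : Integrable f μ :=
  ⟨hf.aestronglyMeasurable,
    HasFiniteIntegral.of_bounded (C := C) (ae_of_all _ fun x => by
      simpa [Real.norm_eq_abs] using h x)⟩

/-- Uniqueness modulo gauge of solutions of the tilting linear system
`a + T b = ζ`, `b + S a = η`, where `T` and `S` are the conditional
expectation operators of a coupling `π` of `(μ, ν)` whose density with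
respect to `μ ⊗ ν` is bounded below by `α > 0`. -/
theorem tilting_system_unique_up_to_gauge
    {X Y : Type*} [MeasurableSpace X] [MeasurableSpace Y]
    (μ : Measure X) (ν : Measure Y) (π : Measure (X × Y))
    [IsProbabilityMeasure μ] [IsProbabilityMeasure ν] [IsProbabilityMeasure π]
    (hμ : π.map Prod.fst = μ) (hν : π.map Prod.snd = ν)
    (α : ℝ) (hα : 0 < α)
    (ρ : X × Y → ℝ≥0∞) (hρm : Measurable ρ)
    (hπρ : π = (μ.prod ν).withDensity ρ)
    (hρlb : ∀ᵐ z ∂(μ.prod ν), ENNReal.ofReal α ≤ ρ z)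
    -- disintegration kernels realizing the conditional expectations
    (κ : Kernel X Y) [IsMarkovKernel κ] (hκ : π = μ.compProd κ)
    (κ' : Kernel Y X) [IsMarkovKernel κ'] (hκ' : π.map Prod.swap = ν.compProd κ')
    -- the data of the linear system
    (ζ : X → ℝ) (η : Y → ℝ) (hζm : Measurable ζ) (hηm : Measurable η)
    (Cζ : ℝ) (hζb : ∀ x, |ζ x| ≤ Cζ) (Cη : ℝ) (hηb : ∀ y, |η y| ≤ Cη)
    -- two pairs of bounded measurable solutions
    (a a' : X → ℝ) (b b' : Y → ℝ)
    (ham : Measurable a) (ha'm : Measurable a')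
    (hbm : Measurable b) (hb'm : Measurable b')
    (Ca : ℝ) (haB : ∀ x, |a x| ≤ Ca) (Ca' : ℝ) (ha'B : ∀ x, |a' x| ≤ Ca')
    (Cb : ℝ) (hbB : ∀ y, |b y| ≤ Cb) (Cb' : ℝ) (hb'B : ∀ y, |b' y| ≤ Cb')
    (hsys1a : (fun x => a x + ∫ y, b y ∂(κ x)) =ᵐ[μ] ζ)
    (hsys1b : (fun y => b y + ∫ x, a x ∂(κ' y)) =ᵐ[ν] η)
    (hsys2a : (fun x => a' x + ∫ y, b' y ∂(κ x)) =ᵐ[μ] ζ)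
    (hsys2b : (fun y => b' y + ∫ x, a' x ∂(κ' y)) =ᵐ[ν] η) :
    ∃ c : ℝ, a' =ᵐ[μ] (fun x => a x + c) ∧ b' =ᵐ[ν] (fun y => b y - c) := by
  classical
  set f : X → ℝ := fun x => a' x - a x with hfdef
  set g : Y → ℝ := fun y => b' y - b y with hgdef
  have hfm : Measurable f := ha'm.sub ham
  have hgm : Measurable g := hb'm.sub hbm
  have hfB : ∀ x, |f x| ≤ Ca' + Ca := fun x =>
    (abs_sub _ _).trans (add_le_add (ha'B x) (haB x))
  have hgB : ∀ y, |g y| ≤ Cb' + Cb := fun y =>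
    (abs_sub _ _).trans (add_le_add (hb'B y) (hbB y))
  set Cf : ℝ := Ca' + Ca with hCfdef
  set Cg : ℝ := Cb' + Cb with hCgdef
  have hXne : Nonempty X := by
    by_contra h
    rw [not_nonempty_iff] at h
    have h1 : μ Set.univ = 1 := measure_univ
    rw [Set.univ_eq_empty_iff.mpr h, measure_empty] at h1
    exact one_ne_zero h1.symm
  have hYne : Nonempty Y := by
    by_contra h
    rw [not_nonempty_iff] at h
    have h1 : ν Set.univ = 1 := measure_univ
    rw [Set.univ_eq_empty_iff.mpr h, measure_empty] at h1
    exact one_ne_zero h1.symm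
  have hCf0 : 0 ≤ Cf := (abs_nonneg _).trans (hfB (Classical.arbitrary X))
  have hCg0 : 0 ≤ Cg := (abs_nonneg _).trans (hgB (Classical.arbitrary Y))
  -- the linear system for the differences
  have hf : ∀ᵐ x ∂μ, f x + ∫ y, g y ∂(κ x) = 0 := by
    filter_upwards [hsys1a, hsys2a] with x h1 h2
    have hib : Integrable b (κ x) := intg_bdd _ hbm hbB
    have hib' : Integrable b' (κ x) := intg_bdd _ hb'm hb'B
    have hsub : ∫ y, g y ∂(κ x) = (∫ y, b' y ∂(κ x)) - ∫ y, b y ∂(κ x) :=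
      integral_sub hib' hib
    have hfx : f x = a' x - a x := rfl
    rw [hsub, hfx]
    linarith
  have hg : ∀ᵐ y ∂ν, g y + ∫ x, f x ∂(κ' y) = 0 := by
    filter_upwards [hsys1b, hsys2b] with y h1 h2
    have hia : Integrable a (κ' y) := intg_bdd _ ham haB
    have hia' : Integrable a' (κ' y) := intg_bdd _ ha'm ha'B
    have hsub : ∫ x, f x ∂(κ' y) = (∫ x, a' x ∂(κ' y)) - ∫ x, a x ∂(κ' y) :=
      integral_sub hia' hia
    have hgy : g y = b' y - b y := rfl
    rw [hsub, hgy]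
    linarith
  -- F(x,y) = f(x) + g(y)
  set F : X × Y → ℝ := fun z => f z.1 + g z.2 with hFdef
  have hFm : Measurable F := (hfm.comp measurable_fst).add (hgm.comp measurable_snd)
  have hFB : ∀ z, |F z| ≤ Cf + Cg := fun z =>
    (abs_add_le _ _).trans (add_le_add (hfB _) (hgB _))
  have hfFB : ∀ z : X × Y, |f z.1 * F z| ≤ Cf * (Cf + Cg) := fun z => by
    rw [abs_mul]
    exact mul_le_mul (hfB _) (hFB _) (abs_nonneg _) hCf0
  have hgFB : ∀ z : X × Y, |g z.2 * F z| ≤ Cg * (Cf + Cg) := fun z => by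
    rw [abs_mul]
    exact mul_le_mul (hgB _) (hFB _) (abs_nonneg _) hCg0
  have hfFm : Measurable fun z : X × Y => f z.1 * F z := (hfm.comp measurable_fst).mul hFm
  have hgFm : Measurable fun z : X × Y => g z.2 * F z := (hgm.comp measurable_snd).mul hFm
  have hint1 : Integrable (fun z : X × Y => f z.1 * F z) π := intg_bdd _ hfFm hfFB
  have hint2 : Integrable (fun z : X × Y => g z.2 * F z) π := intg_bdd _ hgFm hgFB
  -- first integral vanishes
  have hI1 : ∫ z, f z.1 * F z ∂π = 0 := by
    rw [hκ] at hint1 ⊢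
    rw [Measure.integral_compProd hint1]
    apply integral_eq_zero_of_ae
    filter_upwards [hf] with x hx
    have hig : Integrable g (κ x) := intg_bdd _ hgm hgB
    have e : ∫ y, f x * (f x + g y) ∂(κ x) = f x * (f x + ∫ y, g y ∂(κ x)) := by
      rw [integral_const_mul _, integral_add (integrable_const _) hig, integral_const]
      simp
    calc ∫ y, f (x, y).1 * F (x, y) ∂(κ x)
        = ∫ y, f x * (f x + g y) ∂(κ x) := rfl
      _ = f x * (f x + ∫ y, g y ∂(κ x)) := e
      _ = 0 := by rw [hx, mul_zero]
  -- second integral vanishes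
  have hI2 : ∫ z, g z.2 * F z ∂π = 0 := by
    have hGm : Measurable fun w : Y × X => g w.1 * (g w.1 + f w.2) :=
      (hgm.comp measurable_fst).mul ((hgm.comp measurable_fst).add (hfm.comp measurable_snd))
    have e1 : ∫ w, g w.1 * (g w.1 + f w.2) ∂(π.map Prod.swap)
        = ∫ z : X × Y, g z.2 * (g z.2 + f z.1) ∂π :=
      integral_map measurable_swap.aemeasurable hGm.aestronglyMeasurable
    have e2 : ∫ z : X × Y, g z.2 * (g z.2 + f z.1) ∂π = ∫ z, g z.2 * F z ∂π := by
      apply integral_congr_ae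
      apply ae_of_all
      intro z
      show g z.2 * (g z.2 + f z.1) = g z.2 * (f z.1 + g z.2)
      ring
    rw [← e2, ← e1, hκ']
    have hGint : Integrable (fun w : Y × X => g w.1 * (g w.1 + f w.2)) (ν.compProd κ') := by
      apply intg_bdd _ hGm (C := Cg * (Cg + Cf))
      intro w
      rw [abs_mul]
      exact mul_le_mul (hgB _) ((abs_add_le _ _).trans (add_le_add (hgB _) (hfB _)))
        (abs_nonneg _) hCg0
    rw [Measure.integral_compProd hGint]
    apply integral_eq_zero_of_ae
    filter_upwards [hg] with y hy
    have hif : Integrable f (κ' y) := intg_bdd _ hfm hfB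
    have e : ∫ x, g y * (g y + f x) ∂(κ' y) = g y * (g y + ∫ x, f x ∂(κ' y)) := by
      rw [integral_const_mul _, integral_add (integrable_const _) hif, integral_const]
      simp
    calc ∫ x, g (y, x).1 * (g (y, x).1 + f (y, x).2) ∂(κ' y)
        = ∫ x, g y * (g y + f x) ∂(κ' y) := rfl
      _ = g y * (g y + ∫ x, f x ∂(κ' y)) := e
      _ = 0 := by rw [hy, mul_zero]
  -- ∫ F² = 0
  have hsqint : Integrable (fun z => (F z) ^ 2) π := by
    apply intg_bdd _ (hFm.pow_const 2) (C := (Cf + Cg) ^ 2)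
    intro z
    rw [abs_pow]
    nlinarith [hFB z, abs_nonneg (F z)]
  have hsq : ∫ z, (F z) ^ 2 ∂π = 0 := by
    have hrw : (fun z : X × Y => (F z) ^ 2) = fun z => f z.1 * F z + g z.2 * F z := by
      funext z
      show (f z.1 + g z.2) ^ 2 = f z.1 * (f z.1 + g z.2) + g z.2 * (f z.1 + g z.2)
      ring
    rw [hrw, integral_add hint1 hint2, hI1, hI2, add_zero]
  have hF0 : ∀ᵐ z ∂π, F z = 0 := by
    have h2 := (integral_eq_zero_iff_of_nonneg (fun z => sq_nonneg (F z)) hsqint).mp hsq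
    filter_upwards [h2] with z hz
    exact (pow_eq_zero_iff two_ne_zero).mp hz
  -- transfer to μ ⊗ ν using the density lower bound
  have hprod : ∀ᵐ z ∂(μ.prod ν), F z = 0 := by
    set A : Set (X × Y) := {z | F z ≠ 0} with hAdef
    have hAm : MeasurableSet A := (hFm (measurableSet_singleton 0)).compl
    have hπA : π A = 0 := ae_iff.mp hF0
    have hwd : π A = ∫⁻ z in A, ρ z ∂(μ.prod ν) := by
      rw [hπρ, withDensity_apply _ hAm]
    have hle : ENNReal.ofReal α * (μ.prod ν) A ≤ ∫⁻ z in A, ρ z ∂(μ.prod ν) := by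
      calc ENNReal.ofReal α * (μ.prod ν) A
          = ∫⁻ _ in A, ENNReal.ofReal α ∂(μ.prod ν) := by
            rw [setLIntegral_const]
        _ ≤ ∫⁻ z in A, ρ z ∂(μ.prod ν) := lintegral_mono_ae (ae_restrict_of_ae hρlb)
    rw [← hwd, hπA, le_zero_iff, mul_eq_zero] at hle
    have hαne : ENNReal.ofReal α ≠ 0 := by
      simp [ENNReal.ofReal_eq_zero, not_le, hα]
    rw [ae_iff]
    exact hle.resolve_left hαne
  have h7 : ∀ᵐ x ∂μ, ∀ᵐ y ∂ν, f x + g y = 0 := Measure.ae_ae_of_ae_prod hprod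
  set c : ℝ := -∫ y, g y ∂ν with hcdef
  have hig : Integrable g ν := intg_bdd _ hgm hgB
  have hif : Integrable f μ := intg_bdd _ hfm hfB
  have hfc : ∀ᵐ x ∂μ, f x = c := by
    filter_upwards [h7] with x hx
    have h1 : f x = ∫ _ , f x ∂ν := by simp
    rw [h1]
    have h2 : (∫ _, f x ∂ν) = ∫ y, -g y ∂ν := by
      apply integral_congr_ae
      filter_upwards [hx] with y hy
      linarith
    rw [h2, integral_neg]
  have hintf : ∫ x, f x ∂μ = c := by
    rw [integral_congr_ae hfc]
    simp
  have hswap : ∀ᵐ w ∂(ν.prod μ), f w.2 + g w.1 = 0 := by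
    rw [← Measure.prod_swap]
    have hs : MeasurableSet {w : Y × X | f w.2 + g w.1 = 0} :=
      ((hfm.comp measurable_snd).add (hgm.comp measurable_fst)) (measurableSet_singleton 0)
    rw [ae_map_iff measurable_swap.aemeasurable hs]
    filter_upwards [hprod] with z hz
    exact hz
  have h8 : ∀ᵐ y ∂ν, ∀ᵐ x ∂μ, f x + g y = 0 := by
    filter_upwards [Measure.ae_ae_of_ae_prod hswap] with y hy
    filter_upwards [hy] with x hx
    exact hx
  have hgc : ∀ᵐ y ∂ν, g y = -c := by
    filter_upwards [h8] with y hy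
    have h1 : g y = ∫ _, g y ∂μ := by simp
    rw [h1]
    have h2 : (∫ _, g y ∂μ) = ∫ x, -f x ∂μ := by
      apply integral_congr_ae
      filter_upwards [hy] with x hx
      linarith
    rw [h2, integral_neg, hintf]
  refine ⟨c, ?_, ?_⟩
  · filter_upwards [hfc] with x hx
    have hx' : a' x - a x = c := hx
    show a' x = a x + c
    linarith
  · filter_upwards [hgc] with y hy
    have hy' : b' y - b y = -c := hy
    show b' y = b y - c
    linarith
end

section
/- Let X and Y be measurable spaces, let μ and ν be probability measures on X and Y respectively, and let π be a probability measure on X × Y with marginals μ and ν whose density with respect to μ ⊗ ν is bounded below by a constant α ∈ (0, 1]. Define (T b)(x) := E_π[b(Y) | X = x] and (S a)(y) := E_π[a(X) | Y = y]. Let ζ : X → ℝ and η : Y → ℝ be bounded measurable functions satisfying the compatibility condition ∫ ζ dμ = ∫ η dν. Then there exists a pair (a, b) of bounded measurable functions with ∫ b dν = 0 solving a + T b = ζ μ-almost everywhere and b + S a = η ν-almost everywhere; moreover the ν-centered component b of any such solution is unique up to ν-null sets. -/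
open MeasureTheory ProbabilityTheory
open scoped ENNReal

/-!
Write `T b x = ∫ b dκ x` and `S a y = ∫ a dκ' y`. The density bound `π ≥ α (μ ⊗ ν)` gives the
Doeblin minorization `T G ≥ α ∫ G dν` μ-a.e. for `G ≥ 0`; applied to `u ∓ f` with `|f| ≤ u` it
yields `|T f - α ∫ f dν| ≤ T u - α ∫ u dν`. For ν-centered `f` this makes `T` a
`(1 - α)`-contraction both in sup norm (`u` constant) and in `L¹` (`u = |f|`), while `S` increases
neither norm and both preserve integrals.

Existence: `g = η - S ζ` is centered by the compatibility condition, and the Neumann series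
`b = ∑ₙ (S T)ⁿ g` converges geometrically in sup norm and solves `b = g + S T b`; then
`a = ζ - T b`. Since `T` is only controlled μ-a.e., each iterate is clipped at its bound on a
ν-null set so that the bounds hold everywhere. Uniqueness: the difference `d` of the centered
components of two solutions satisfies `d = S e`, `e = T d`, hence `‖d‖₁ ≤ (1 - α) ‖d‖₁`.
-/

section Bounded

variable {Z : Type*} [MeasurableSpace Z] {P : Measure Z}

lemma integrable_of_abs_le [IsFiniteMeasure P] {f : Z → ℝ} (hf : Measurable f) {C : ℝ}
    (hC : ∀ z, |f z| ≤ C) : Integrable f P :=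
  Integrable.of_bound hf.aestronglyMeasurable C (ae_of_all _ hC)

lemma abs_integral_le_of_ae_abs_le [IsProbabilityMeasure P] {f : Z → ℝ} {C : ℝ}
    (hC : ∀ᵐ z ∂P, |f z| ≤ C) : |∫ z, f z ∂P| ≤ C := by
  simpa using norm_integral_le_of_norm_le_const (f := f) hC

lemma exists_measurable_abs_le_ae_eq {g : Z → ℝ} (hg : Measurable g) {c : ℝ} (hc : 0 ≤ c)
    (hgc : ∀ᵐ z ∂P, |g z| ≤ c) : ∃ g' : Z → ℝ, Measurable g' ∧ (∀ z, |g' z| ≤ c) ∧ g' =ᵐ[P] g := by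
  refine ⟨fun z => max (-c) (min (g z) c), measurable_const.max (hg.min measurable_const),
    fun z => abs_le.2 ⟨le_max_left _ _, max_le (by linarith) (min_le_right _ _)⟩, ?_⟩
  filter_upwards [hgc] with z hz
  rw [min_eq_left (abs_le.1 hz).2, max_eq_right (abs_le.1 hz).1]

lemma integral_tsum_of_abs_le [IsFiniteMeasure P] {F : ℕ → Z → ℝ} (hF : ∀ n, Measurable (F n))
    {c : ℕ → ℝ} (hc : Summable c) (hFc : ∀ n z, |F n z| ≤ c n) :
    ∫ z, ∑' n, F n z ∂P = ∑' n, ∫ z, F n z ∂P := by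
  refine (integral_tsum_of_summable_integral_norm
    (fun n => integrable_of_abs_le (hF n) (hFc n)) ?_).symm
  refine (hc.mul_right (P.real Set.univ)).of_nonneg_of_le
    (fun n => integral_nonneg fun z => norm_nonneg _) fun n => ?_
  calc ∫ z, ‖F n z‖ ∂P ≤ ∫ _, c n ∂P :=
        integral_mono (integrable_of_abs_le (hF n) (hFc n)).norm (integrable_const _) (hFc n)
    _ = c n * P.real Set.univ := by rw [integral_const, smul_eq_mul, mul_comm]

end Bounded

section Kernel

variable {X Y : Type*} [MeasurableSpace X] [MeasurableSpace Y] {μ : Measure X} {ν : Measure Y}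

lemma measurable_integral_kernel (κ : Kernel X Y) {f : Y → ℝ} (hf : Measurable f) :
    Measurable fun x => ∫ y, f y ∂κ x :=
  hf.stronglyMeasurable.integral_kernel.measurable

lemma abs_integral_kernel_le (κ : Kernel X Y) [IsMarkovKernel κ] {f : Y → ℝ} {C : ℝ}
    (hC : ∀ y, |f y| ≤ C) (x : X) : |∫ y, f y ∂κ x| ≤ C :=
  abs_integral_le_of_ae_abs_le (ae_of_all _ hC)

lemma integral_integral_kernel_of_snd_compProd [SFinite μ] {κ : Kernel X Y} [IsSFiniteKernel κ]
    (hν : (μ ⊗ₘ κ).snd = ν) {f : Y → ℝ} (hf : Integrable f ν) :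
    ∫ x, ∫ y, f y ∂κ x ∂μ = ∫ y, f y ∂ν := by
  subst hν
  rw [Measure.snd, integral_map measurable_snd.aemeasurable hf.1]
  exact (Measure.integral_compProd
    ((integrable_map_measure hf.1 measurable_snd.aemeasurable).1 hf)).symm

lemma ae_abs_integral_kernel_le_of_snd_compProd [SFinite ν] {κ : Kernel Y X} [IsMarkovKernel κ]
    (hμ : (ν ⊗ₘ κ).snd = μ) {g : X → ℝ} {c : ℝ} (hg : ∀ᵐ x ∂μ, |g x| ≤ c) :
    ∀ᵐ y ∂ν, |∫ x, g x ∂κ y| ≤ c := by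
  rw [← hμ, Measure.snd_compProd] at hg
  filter_upwards [Measure.ae_ae_of_ae_comp hg] with y hy using abs_integral_le_of_ae_abs_le hy

lemma tsum_ae_eq_add_integral_integral_kernel_tsum (κ : Kernel X Y) [IsMarkovKernel κ]
    (κ' : Kernel Y X) [IsMarkovKernel κ'] {r : ℕ → Y → ℝ} (hr : ∀ n, Measurable (r n))
    {c : ℕ → ℝ} (hc : Summable c) (hrc : ∀ n y, |r n y| ≤ c n)
    (hrec : ∀ n, r (n + 1) =ᵐ[ν] fun y => ∫ x, ∫ y', r n y' ∂κ x ∂κ' y) :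
    (fun y => ∑' n, r n y) =ᵐ[ν] fun y => r 0 y + ∫ x, ∫ y', ∑' n, r n y' ∂κ x ∂κ' y := by
  have hT : ∀ x, ∫ y', ∑' n, r n y' ∂κ x = ∑' n, ∫ y', r n y' ∂κ x :=
    fun x => integral_tsum_of_abs_le hr hc hrc
  have hST : ∀ y, ∫ x, ∫ y', ∑' n, r n y' ∂κ x ∂κ' y = ∑' n, ∫ x, ∫ y', r n y' ∂κ x ∂κ' y := by
    intro y
    simp_rw [hT]
    exact integral_tsum_of_abs_le (fun n => measurable_integral_kernel κ (hr n)) hc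
      fun n => abs_integral_kernel_le κ (hrc n)
  filter_upwards [ae_all_iff.2 hrec] with y hy
  rw [hST, (hc.of_norm_bounded fun n => hrc n y).tsum_eq_zero_add]
  exact congrArg _ (tsum_congr hy)

lemma sub_ae_eq_integral_kernel_sub {P : Measure X} (κ : Kernel X Y) [IsMarkovKernel κ]
    {f₁ f₂ : Y → ℝ} (hf₁ : Measurable f₁) {C₁ : ℝ} (hC₁ : ∀ y, |f₁ y| ≤ C₁)
    (hf₂ : Measurable f₂) {C₂ : ℝ} (hC₂ : ∀ y, |f₂ y| ≤ C₂) {g₁ g₂ h : X → ℝ}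
    (h₁ : (fun x => g₁ x + ∫ y, f₁ y ∂κ x) =ᵐ[P] h)
    (h₂ : (fun x => g₂ x + ∫ y, f₂ y ∂κ x) =ᵐ[P] h) :
    (fun x => g₁ x - g₂ x) =ᵐ[P] fun x => ∫ y, f₂ y - f₁ y ∂κ x := by
  filter_upwards [h₁, h₂] with x hx₁ hx₂
  rw [integral_sub (integrable_of_abs_le hf₂ hC₂) (integrable_of_abs_le hf₁ hC₁)]
  linarith

end Kernel

section Doeblin

variable {X Y : Type*} [MeasurableSpace X] [MeasurableSpace Y] {μ : Measure X} {ν : Measure Y}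
  [IsProbabilityMeasure μ] [IsProbabilityMeasure ν] {κ : Kernel X Y} [IsMarkovKernel κ]
  {κ' : Kernel Y X} [IsMarkovKernel κ'] {α : ℝ}

lemma ae_mul_integral_le_integral_kernel (hα : 0 ≤ α)
    (hle : ENNReal.ofReal α • μ.prod ν ≤ μ ⊗ₘ κ) {G : Y → ℝ} (hG : Measurable G)
    (hG0 : ∀ y, 0 ≤ G y) {C : ℝ} (hGC : ∀ y, G y ≤ C) :
    ∀ᵐ x ∂μ, α * ∫ y, G y ∂ν ≤ ∫ y, G y ∂κ x := by
  have hGabs : ∀ y, |G y| ≤ C := fun y => (abs_of_nonneg (hG0 y)).trans_le (hGC y)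
  have hGint : ∀ (P : Measure (X × Y)) [IsFiniteMeasure P], Integrable (fun z => G z.2) P :=
    fun P _ => integrable_of_abs_le (hG.comp measurable_snd) fun z => hGabs z.2
  refine ae_le_of_forall_setIntegral_le (integrable_const _)
    (integrable_of_abs_le (measurable_integral_kernel κ hG) (abs_integral_kernel_le κ hGabs))
    fun s hs _ => ?_
  calc ∫ _ in s, α * ∫ y, G y ∂ν ∂μ
      = ∫ z in s ×ˢ Set.univ, G z.2 ∂(ENNReal.ofReal α • μ.prod ν) := by
        rw [Measure.restrict_smul, integral_smul_measure, ← Measure.compProd_const,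
          Measure.setIntegral_compProd hs .univ (hGint _).integrableOn]
        simp [ENNReal.toReal_ofReal hα]
        ring
    _ ≤ ∫ z in s ×ˢ Set.univ, G z.2 ∂(μ ⊗ₘ κ) :=
        integral_mono_measure (Measure.restrict_mono subset_rfl hle)
          (ae_of_all _ fun z => hG0 z.2) (hGint _)
    _ = ∫ x in s, ∫ y, G y ∂κ x ∂μ := by
        rw [Measure.setIntegral_compProd hs .univ (hGint _).integrableOn]
        simp

lemma ae_abs_integral_kernel_sub_le (hα : 0 ≤ α) (hle : ENNReal.ofReal α • μ.prod ν ≤ μ ⊗ₘ κ)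
    {f u : Y → ℝ} (hf : Measurable f) (hu : Measurable u) (hfu : ∀ y, |f y| ≤ u y) {C : ℝ}
    (huC : ∀ y, u y ≤ C) :
    ∀ᵐ x ∂μ, |∫ y, f y ∂κ x - α * ∫ y, f y ∂ν| ≤ ∫ y, u y ∂κ x - α * ∫ y, u y ∂ν := by
  have hfC : ∀ y, |f y| ≤ C := fun y => (hfu y).trans (huC y)
  have huC' : ∀ y, |u y| ≤ C := fun y => by
    rw [abs_of_nonneg ((abs_nonneg _).trans (hfu y))]; exact huC y
  have hminus := ae_mul_integral_le_integral_kernel hα hle (G := fun y => u y - f y) (hu.sub hf)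
    (fun y => sub_nonneg.2 (le_of_abs_le (hfu y))) (C := 2 * C)
    (fun y => by linarith [neg_abs_le (f y), hfu y, huC y, hfC y])
  have hplus := ae_mul_integral_le_integral_kernel hα hle (G := fun y => u y + f y) (hu.add hf)
    (fun y => by linarith [neg_abs_le (f y), hfu y]) (C := 2 * C)
    (fun y => by linarith [le_abs_self (f y), hfu y, huC y, hfC y])
  filter_upwards [hminus, hplus] with x hx₁ hx₂
  have hfi : ∀ P : Measure Y, [IsFiniteMeasure P] → Integrable f P :=
    fun P _ => integrable_of_abs_le hf hfC
  have hui : ∀ P : Measure Y, [IsFiniteMeasure P] → Integrable u P :=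
    fun P _ => integrable_of_abs_le hu huC'
  rw [integral_sub (hui _) (hfi _), integral_sub (hui _) (hfi _)] at hx₁
  rw [integral_add (hui _) (hfi _), integral_add (hui _) (hfi _)] at hx₂
  exact abs_le.2 ⟨by linarith, by linarith⟩

lemma ae_abs_integral_kernel_le_of_integral_eq_zero (hα : 0 ≤ α)
    (hle : ENNReal.ofReal α • μ.prod ν ≤ μ ⊗ₘ κ) {f : Y → ℝ} (hf : Measurable f) {c : ℝ}
    (hfc : ∀ y, |f y| ≤ c) (hf0 : ∫ y, f y ∂ν = 0) :
    ∀ᵐ x ∂μ, |∫ y, f y ∂κ x| ≤ (1 - α) * c := by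
  filter_upwards [ae_abs_integral_kernel_sub_le hα hle hf measurable_const hfc (C := c)
    fun _ => le_rfl] with x hx
  simpa [hf0, sub_mul] using hx

lemma integral_abs_integral_kernel_le (hα : 0 ≤ α) (hle : ENNReal.ofReal α • μ.prod ν ≤ μ ⊗ₘ κ)
    (hν : (μ ⊗ₘ κ).snd = ν) {f : Y → ℝ} (hf : Measurable f) {C : ℝ} (hfC : ∀ y, |f y| ≤ C)
    (hf0 : ∫ y, f y ∂ν = 0) :
    ∫ x, |∫ y, f y ∂κ x| ∂μ ≤ (1 - α) * ∫ y, |f y| ∂ν := by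
  have hfC' : ∀ y, |(|f y|)| ≤ C := fun y => (abs_abs (f y)).trans_le (hfC y)
  have hTabs : Integrable (fun x => ∫ y, |f y| ∂κ x) μ :=
    integrable_of_abs_le (measurable_integral_kernel κ hf.abs) (abs_integral_kernel_le κ hfC')
  calc ∫ x, |∫ y, f y ∂κ x| ∂μ ≤ ∫ x, (∫ y, |f y| ∂κ x - α * ∫ y, |f y| ∂ν) ∂μ := by
        refine integral_mono_ae ((integrable_of_abs_le (measurable_integral_kernel κ hf)
          (abs_integral_kernel_le κ hfC)).abs) (hTabs.sub (integrable_const _)) ?_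
        filter_upwards [ae_abs_integral_kernel_sub_le hα hle hf hf.abs (fun y => le_rfl) hfC]
          with x hx
        simpa [hf0] using hx
    _ = (1 - α) * ∫ y, |f y| ∂ν := by
        rw [integral_sub hTabs (integrable_const _), integral_integral_kernel_of_snd_compProd hν
          (integrable_of_abs_le hf.abs hfC')]
        simp only [integral_const, probReal_univ, one_smul]
        ring

lemma exists_ae_eq_integral_integral_kernel (hα : 0 ≤ α) (hα1 : α ≤ 1)
    (hle : ENNReal.ofReal α • μ.prod ν ≤ μ ⊗ₘ κ) (hν : (μ ⊗ₘ κ).snd = ν) (hμ : (ν ⊗ₘ κ').snd = μ)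
    {f : Y → ℝ} (hf : Measurable f) {c : ℝ} (hc : 0 ≤ c) (hfc : ∀ y, |f y| ≤ c)
    (hf0 : ∫ y, f y ∂ν = 0) :
    ∃ g : Y → ℝ, Measurable g ∧ (∀ y, |g y| ≤ (1 - α) * c) ∧ ∫ y, g y ∂ν = 0 ∧
      g =ᵐ[ν] fun y => ∫ x, ∫ y', f y' ∂κ x ∂κ' y := by
  have hTf := measurable_integral_kernel κ hf
  obtain ⟨g, hg, hgc, hgae⟩ := exists_measurable_abs_le_ae_eq
    (measurable_integral_kernel κ' hTf) (mul_nonneg (by linarith) hc)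
    (ae_abs_integral_kernel_le_of_snd_compProd hμ
      (ae_abs_integral_kernel_le_of_integral_eq_zero hα hle hf hfc hf0))
  refine ⟨g, hg, hgc, ?_, hgae⟩
  rw [integral_congr_ae hgae, integral_integral_kernel_of_snd_compProd hμ
      (integrable_of_abs_le hTf (abs_integral_kernel_le κ hfc)),
    integral_integral_kernel_of_snd_compProd hν (integrable_of_abs_le hf hfc), hf0]

end Doeblin

section Solution

variable {X Y : Type*} [MeasurableSpace X] [MeasurableSpace Y] {μ : Measure X} {ν : Measure Y}
  [IsProbabilityMeasure μ] [IsProbabilityMeasure ν] {κ : Kernel X Y} [IsMarkovKernel κ]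
  {κ' : Kernel Y X} [IsMarkovKernel κ'] {α : ℝ}

theorem exists_integral_eq_zero_ae_eq_add_integral_integral_kernel (hα0 : 0 < α) (hα1 : α ≤ 1)
    (hle : ENNReal.ofReal α • μ.prod ν ≤ μ ⊗ₘ κ) (hν : (μ ⊗ₘ κ).snd = ν) (hμ : (ν ⊗ₘ κ').snd = μ)
    {g : Y → ℝ} (hg : Measurable g) {K : ℝ} (hgK : ∀ y, |g y| ≤ K) (hg0 : ∫ y, g y ∂ν = 0) :
    ∃ b : Y → ℝ, Measurable b ∧ (∃ C, ∀ y, |b y| ≤ C) ∧ ∫ y, b y ∂ν = 0 ∧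
      b =ᵐ[ν] fun y => g y + ∫ x, ∫ y', b y' ∂κ x ∂κ' y := by
  choose! F hFm hFc hF0 hFae using fun (c : ℝ) (f : Y → ℝ)
      (h : 0 ≤ c ∧ Measurable f ∧ (∀ y, |f y| ≤ c) ∧ ∫ y, f y ∂ν = 0) =>
    exists_ae_eq_integral_integral_kernel hα0.le hα1 hle hν hμ h.2.1 h.1 h.2.2.1 h.2.2.2
  have hK : 0 ≤ K := (abs_nonneg _).trans (hgK (nonempty_of_isProbabilityMeasure ν).some)
  let r : ℕ → Y → ℝ := fun n => Nat.rec g (fun n f => F ((1 - α) ^ n * K) f) n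
  have hq : 0 ≤ 1 - α := by linarith
  have hr : ∀ n, Measurable (r n) ∧ (∀ y, |r n y| ≤ (1 - α) ^ n * K) ∧ ∫ y, r n y ∂ν = 0 := by
    intro n
    induction n with
    | zero => simpa [r] using ⟨hg, hgK, hg0⟩
    | succ n ih =>
      have h : 0 ≤ (1 - α) ^ n * K ∧ _ := ⟨by positivity, ih⟩
      exact ⟨hFm _ _ h, fun y => (hFc _ _ h y).trans_eq (by ring), hF0 _ _ h⟩
  have hc : Summable fun n => (1 - α) ^ n * K :=
    (summable_geometric_of_lt_one hq (by linarith)).mul_right K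
  refine ⟨fun y => ∑' n, r n y, Measurable.tsum fun n => (hr n).1,
    ⟨_, fun y => tsum_of_norm_bounded (f := fun n => r n y) hc.hasSum fun n => (hr n).2.1 y⟩,
    ?_, ?_⟩
  · simp [integral_tsum_of_abs_le (fun n => (hr n).1) hc fun n => (hr n).2.1, (hr _).2.2]
  · exact tsum_ae_eq_add_integral_integral_kernel_tsum κ κ' (fun n => (hr n).1) hc
      (fun n => (hr n).2.1) fun n => hFae _ _ ⟨by positivity, hr n⟩

theorem ae_eq_zero_of_ae_eq_integral_kernel (hα0 : 0 < α)
    (hle : ENNReal.ofReal α • μ.prod ν ≤ μ ⊗ₘ κ) (hν : (μ ⊗ₘ κ).snd = ν) (hμ : (ν ⊗ₘ κ').snd = μ)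
    {d : Y → ℝ} (hd : Measurable d) {C : ℝ} (hdC : ∀ y, |d y| ≤ C) (hd0 : ∫ y, d y ∂ν = 0)
    {e : X → ℝ} (he : Measurable e) {D : ℝ} (heD : ∀ x, |e x| ≤ D)
    (hde : d =ᵐ[ν] fun y => ∫ x, e x ∂κ' y) (hed : e =ᵐ[μ] fun x => ∫ y, d y ∂κ x) :
    d =ᵐ[ν] 0 := by
  have heD' : ∀ x, |(|e x|)| ≤ D := fun x => (abs_abs (e x)).trans_le (heD x)
  have hdint : Integrable (fun y => |d y|) ν :=
    integrable_of_abs_le hd.abs fun y => (abs_abs (d y)).trans_le (hdC y)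
  have hI : ∫ y, |d y| ∂ν ≤ (1 - α) * ∫ y, |d y| ∂ν :=
    calc ∫ y, |d y| ∂ν = ∫ y, |∫ x, e x ∂κ' y| ∂ν := integral_congr_ae (hde.fun_comp abs)
      _ ≤ ∫ y, ∫ x, |e x| ∂κ' y ∂ν :=
          integral_mono (integrable_of_abs_le (measurable_integral_kernel κ' he)
            (abs_integral_kernel_le κ' heD)).abs
            (integrable_of_abs_le (measurable_integral_kernel κ' he.abs)
              (abs_integral_kernel_le κ' heD'))
            fun y => abs_integral_le_integral_abs
      _ = ∫ x, |e x| ∂μ := integral_integral_kernel_of_snd_compProd hμ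
          (integrable_of_abs_le he.abs heD')
      _ = ∫ x, |∫ y, d y ∂κ x| ∂μ := integral_congr_ae (hed.fun_comp abs)
      _ ≤ (1 - α) * ∫ y, |d y| ∂ν := integral_abs_integral_kernel_le hα0.le hle hν hd hdC hd0
  have hI0 : ∫ y, |d y| ∂ν = 0 := by
    nlinarith [integral_nonneg (μ := ν) (f := fun y => |d y|) fun y => abs_nonneg (d y)]
  filter_upwards [(integral_eq_zero_iff_of_nonneg (fun y => abs_nonneg (d y)) hdint).1 hI0]
    with y hy
  simpa using hy

theorem exists_centered_solution (hα0 : 0 < α) (hα1 : α ≤ 1)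
    (hle : ENNReal.ofReal α • μ.prod ν ≤ μ ⊗ₘ κ) (hν : (μ ⊗ₘ κ).snd = ν) (hμ : (ν ⊗ₘ κ').snd = μ)
    {ζ : X → ℝ} {η : Y → ℝ} (hζm : Measurable ζ) {Cζ : ℝ} (hζb : ∀ x, |ζ x| ≤ Cζ)
    (hηm : Measurable η) {Cη : ℝ} (hηb : ∀ y, |η y| ≤ Cη)
    (hcompat : ∫ x, ζ x ∂μ = ∫ y, η y ∂ν) :
    ∃ a : X → ℝ, ∃ b : Y → ℝ,
      Measurable a ∧ (∃ C, ∀ x, |a x| ≤ C) ∧ Measurable b ∧ (∃ C, ∀ y, |b y| ≤ C) ∧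
      ∫ y, b y ∂ν = 0 ∧ (fun x => a x + ∫ y, b y ∂κ x) =ᵐ[μ] ζ ∧
      (fun y => b y + ∫ x, a x ∂κ' y) =ᵐ[ν] η := by
  have hSζ := abs_integral_kernel_le κ' hζb
  obtain ⟨b, hb, ⟨B, hB⟩, hb0, hfix⟩ :=
    exists_integral_eq_zero_ae_eq_add_integral_integral_kernel hα0 hα1 hle hν hμ
      (g := fun y => η y - ∫ x, ζ x ∂κ' y) (hηm.sub (measurable_integral_kernel κ' hζm))
      (fun y => (abs_sub _ _).trans (add_le_add (hηb y) (hSζ y)))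
      (by rw [integral_sub (integrable_of_abs_le hηm hηb)
            (integrable_of_abs_le (measurable_integral_kernel κ' hζm) hSζ),
          integral_integral_kernel_of_snd_compProd hμ (integrable_of_abs_le hζm hζb),
          hcompat, sub_self])
  refine ⟨fun x => ζ x - ∫ y, b y ∂κ x, b, hζm.sub (measurable_integral_kernel κ hb),
    ⟨Cζ + B, fun x => (abs_sub _ _).trans (add_le_add (hζb x) (abs_integral_kernel_le κ hB x))⟩,
    hb, ⟨B, hB⟩, hb0, ae_of_all _ fun x => by simp, ?_⟩
  filter_upwards [hfix] with y hy
  rw [integral_sub (integrable_of_abs_le hζm hζb)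
    (integrable_of_abs_le (measurable_integral_kernel κ hb) (abs_integral_kernel_le κ hB))]
  linarith

end Solution

theorem tilting_system_exists_unique_centered_general
    {X Y : Type*} [MeasurableSpace X] [MeasurableSpace Y]
    (μ : Measure X) (ν : Measure Y) (π : Measure (X × Y))
    [IsProbabilityMeasure μ] [IsProbabilityMeasure ν]
    (hμ : π.map Prod.fst = μ) (hν : π.map Prod.snd = ν)
    (α : ℝ) (hα0 : 0 < α) (hα1 : α ≤ 1)
    (ρ : X × Y → ℝ≥0∞)
    (hπρ : π = (μ.prod ν).withDensity ρ)
    (hρlb : ∀ᵐ z ∂(μ.prod ν), ENNReal.ofReal α ≤ ρ z)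
    -- disintegration kernels realizing the conditional expectations
    (κ : Kernel X Y) [IsMarkovKernel κ] (hκ : π = μ.compProd κ)
    (κ' : Kernel Y X) [IsMarkovKernel κ'] (hκ' : π.map Prod.swap = ν.compProd κ')
    -- the data of the linear system
    (ζ : X → ℝ) (η : Y → ℝ) (hζm : Measurable ζ) (hηm : Measurable η)
    (Cζ : ℝ) (hζb : ∀ x, |ζ x| ≤ Cζ) (Cη : ℝ) (hηb : ∀ y, |η y| ≤ Cη)
    (hcompat : ∫ x, ζ x ∂μ = ∫ y, η y ∂ν) :
    (∃ a : X → ℝ, ∃ b : Y → ℝ,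
      Measurable a ∧ (∃ C, ∀ x, |a x| ≤ C) ∧
      Measurable b ∧ (∃ C, ∀ y, |b y| ≤ C) ∧
      (∫ y, b y ∂ν) = 0 ∧
      (fun x => a x + ∫ y, b y ∂(κ x)) =ᵐ[μ] ζ ∧
      (fun y => b y + ∫ x, a x ∂(κ' y)) =ᵐ[ν] η)
    ∧ (∀ (a₁ a₂ : X → ℝ) (b₁ b₂ : Y → ℝ),
        Measurable a₁ → (∃ C, ∀ x, |a₁ x| ≤ C) →
        Measurable b₁ → (∃ C, ∀ y, |b₁ y| ≤ C) →
        (∫ y, b₁ y ∂ν) = 0 →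
        (fun x => a₁ x + ∫ y, b₁ y ∂(κ x)) =ᵐ[μ] ζ →
        (fun y => b₁ y + ∫ x, a₁ x ∂(κ' y)) =ᵐ[ν] η →
        Measurable a₂ → (∃ C, ∀ x, |a₂ x| ≤ C) →
        Measurable b₂ → (∃ C, ∀ y, |b₂ y| ≤ C) →
        (∫ y, b₂ y ∂ν) = 0 →
        (fun x => a₂ x + ∫ y, b₂ y ∂(κ x)) =ᵐ[μ] ζ →
        (fun y => b₂ y + ∫ x, a₂ x ∂(κ' y)) =ᵐ[ν] η →
        b₁ =ᵐ[ν] b₂) := by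
  have hle : ENNReal.ofReal α • μ.prod ν ≤ μ ⊗ₘ κ := by
    rw [← hκ, hπρ, ← withDensity_const]
    exact withDensity_mono hρlb
  have hνκ : (μ ⊗ₘ κ).snd = ν := hκ ▸ hν
  have hμκ' : (ν ⊗ₘ κ').snd = μ := by rw [← hκ', Measure.snd_map_swap]; exact hμ
  refine ⟨exists_centered_solution hα0 hα1 hle hνκ hμκ' hζm hζb hηm hηb hcompat,
    fun a₁ a₂ b₁ b₂ ha₁ ⟨A₁, hA₁⟩ hb₁ ⟨B₁, hB₁⟩ h₁0 hT₁ hS₁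
      ha₂ ⟨A₂, hA₂⟩ hb₂ ⟨B₂, hB₂⟩ h₂0 hT₂ hS₂ => ?_⟩
  have hd0 : ∫ y, b₁ y - b₂ y ∂ν = 0 := by
    rw [integral_sub (integrable_of_abs_le hb₁ hB₁) (integrable_of_abs_le hb₂ hB₂), h₁0, h₂0,
      sub_zero]
  filter_upwards [ae_eq_zero_of_ae_eq_integral_kernel hα0 hle hνκ hμκ' (hb₁.sub hb₂)
    (fun y => (abs_sub _ _).trans (add_le_add (hB₁ y) (hB₂ y))) hd0 (ha₂.sub ha₁)
    (fun x => (abs_sub _ _).trans (add_le_add (hA₂ x) (hA₁ x)))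
    (sub_ae_eq_integral_kernel_sub κ' ha₁ hA₁ ha₂ hA₂ hS₁ hS₂)
    (sub_ae_eq_integral_kernel_sub κ hb₂ hB₂ hb₁ hB₁ hT₂ hT₁)] with y hy
  exact sub_eq_zero.1 hy

/-- Existence of a bounded measurable solution of the tilting linear system
`a + T b = ζ`, `b + S a = η` with the gauge `∫ b dν = 0`, together with
uniqueness (up to `ν`-null sets) of the `ν`-centered component, under the
Doeblin-type lower bound `π ≥ α · (μ ⊗ ν)` with `α ∈ (0, 1]` and the
compatibility condition `∫ ζ dμ = ∫ η dν`. -/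
theorem tilting_system_exists_unique_centered
    {X Y : Type*} [MeasurableSpace X] [MeasurableSpace Y]
    (μ : Measure X) (ν : Measure Y) (π : Measure (X × Y))
    [IsProbabilityMeasure μ] [IsProbabilityMeasure ν] [IsProbabilityMeasure π]
    (hμ : π.map Prod.fst = μ) (hν : π.map Prod.snd = ν)
    (α : ℝ) (hα0 : 0 < α) (hα1 : α ≤ 1)
    (ρ : X × Y → ℝ≥0∞) (hρm : Measurable ρ)
    (hπρ : π = (μ.prod ν).withDensity ρ)
    (hρlb : ∀ᵐ z ∂(μ.prod ν), ENNReal.ofReal α ≤ ρ z)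
    -- disintegration kernels realizing the conditional expectations
    (κ : Kernel X Y) [IsMarkovKernel κ] (hκ : π = μ.compProd κ)
    (κ' : Kernel Y X) [IsMarkovKernel κ'] (hκ' : π.map Prod.swap = ν.compProd κ')
    -- the data of the linear system
    (ζ : X → ℝ) (η : Y → ℝ) (hζm : Measurable ζ) (hηm : Measurable η)
    (Cζ : ℝ) (hζb : ∀ x, |ζ x| ≤ Cζ) (Cη : ℝ) (hηb : ∀ y, |η y| ≤ Cη)
    (hcompat : ∫ x, ζ x ∂μ = ∫ y, η y ∂ν) :
    (∃ a : X → ℝ, ∃ b : Y → ℝ,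
      Measurable a ∧ (∃ C, ∀ x, |a x| ≤ C) ∧
      Measurable b ∧ (∃ C, ∀ y, |b y| ≤ C) ∧
      (∫ y, b y ∂ν) = 0 ∧
      (fun x => a x + ∫ y, b y ∂(κ x)) =ᵐ[μ] ζ ∧
      (fun y => b y + ∫ x, a x ∂(κ' y)) =ᵐ[ν] η)
    ∧ (∀ (a₁ a₂ : X → ℝ) (b₁ b₂ : Y → ℝ),
        Measurable a₁ → (∃ C, ∀ x, |a₁ x| ≤ C) →
        Measurable b₁ → (∃ C, ∀ y, |b₁ y| ≤ C) →
        (∫ y, b₁ y ∂ν) = 0 →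
        (fun x => a₁ x + ∫ y, b₁ y ∂(κ x)) =ᵐ[μ] ζ →
        (fun y => b₁ y + ∫ x, a₁ x ∂(κ' y)) =ᵐ[ν] η →
        Measurable a₂ → (∃ C, ∀ x, |a₂ x| ≤ C) →
        Measurable b₂ → (∃ C, ∀ y, |b₂ y| ≤ C) →
        (∫ y, b₂ y ∂ν) = 0 →
        (fun x => a₂ x + ∫ y, b₂ y ∂(κ x)) =ᵐ[μ] ζ →
        (fun y => b₂ y + ∫ x, a₂ x ∂(κ' y)) =ᵐ[ν] η →
        b₁ =ᵐ[ν] b₂) :=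
  tilting_system_exists_unique_centered_general μ ν π hμ hν α hα0 hα1 ρ hπρ hρlb κ hκ κ' hκ' ζ η hζm
    hηm Cζ hζb Cη hηb hcompat
end

section
/- Let λ be a finite measure on a measurable space Y, let K : X × Y → (0, ∞) be bounded measurable, and let ψ₁, ψ₂ : Y → ℝ be bounded measurable functions with sup_y |ψ₁(y) − ψ₂(y)| ≤ ε. For i = 1, 2 define the probability kernels k_i(x, dy) := K(x, y) e^{ψ_i(y)} dλ(y) / ∫ K(x, z) e^{ψ_i(z)} dλ(z). Then sup_x ‖k₁(x, ·) − k₂(x, ·)‖_TV ≤ ε e^{2ε}, and consequently for every bounded measurable h : Y → ℝ, sup_x |∫ h dk₁(x, ·) − ∫ h dk₂(x, ·)| ≤ 2 ‖h‖_∞ ε e^{2ε}. -/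
/-!
Write `f_i(y) = K(x, y) e^{ψ_i(y)}`. The bound `|ψ₁ − ψ₂| ≤ ε` gives `f₁ ≤ e^ε f₂` and
`f₂ ≤ e^ε f₁` pointwise, hence the same for the normalizing constants, so the normalized
densities satisfy `p₁ ≤ e^{2ε} p₂` and `p₂ ≤ e^{2ε} p₁`. Then `|p₁ − p₂| ≤ (e^{2ε} − 1) p₂`,
which integrates to `‖p₁ − p₂‖_{L¹} ≤ e^{2ε} − 1 ≤ 2ε e^{2ε}`; integrals of a bounded `h`
differ by at most `‖h‖_∞ ‖p₁ − p₂‖_{L¹}`.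
-/

open MeasureTheory Real

lemma abs_sub_le_sub_one_mul_of_le_mul {p q t : ℝ} (hp : 0 ≤ p) (hq : 0 ≤ q)
    (hpq : p ≤ t * q) (hqp : q ≤ t * p) : |p - q| ≤ (t - 1) * q := by
  rw [abs_le]
  constructor <;> nlinarith [sq_nonneg (t - 1), mul_nonneg hp hq]

lemma exp_sub_one_le_mul_exp (x : ℝ) : exp x - 1 ≤ x * exp x := by
  have h := mul_le_mul_of_nonneg_right (one_sub_le_exp_neg x) (exp_pos x).le
  rw [← exp_add, neg_add_cancel, exp_zero] at h
  linarith

lemma mul_exp_le_exp_mul_mul_exp {k a b ε : ℝ} (hk : 0 ≤ k) (hab : |a - b| ≤ ε) :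
    k * exp a ≤ exp ε * (k * exp b) := by
  rw [mul_left_comm, ← exp_add]
  gcongr
  linarith [(abs_le.1 hab).2]

section Normalization

variable {Y : Type*} [MeasurableSpace Y] {μ : Measure Y}

lemma integral_pos_of_forall_pos {f : Y → ℝ} (hμ : μ ≠ 0) (hf : Integrable f μ)
    (hpos : ∀ y, 0 < f y) : 0 < ∫ y, f y ∂μ := by
  rw [integral_pos_iff_support_of_nonneg (fun y => (hpos y).le) hf,
    Function.support_eq_univ fun y => (hpos y).ne', Measure.measure_univ_pos]
  exact hμ

lemma integrable_mul_exp_of_bounded [IsFiniteMeasure μ] {g ψ : Y → ℝ} {C B : ℝ}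
    (hg : Measurable g) (hψ : Measurable ψ) (hgC : ∀ y, |g y| ≤ C) (hψB : ∀ y, ψ y ≤ B) :
    Integrable (fun y => g y * exp (ψ y)) μ :=
  .of_bound (hg.mul hψ.exp).aestronglyMeasurable (C * exp B) <| ae_of_all _ fun y => by
    rw [norm_eq_abs, abs_mul, abs_exp]
    exact mul_le_mul (hgC y) (exp_le_exp.2 (hψB y)) (exp_pos _).le ((abs_nonneg _).trans (hgC y))

variable {f g : Y → ℝ} {c : ℝ}

lemma div_integral_le_sq_mul_div_integral (hμ : μ ≠ 0) (hf : Integrable f μ)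
    (hg : Integrable g μ) (hfpos : ∀ y, 0 < f y) (hgpos : ∀ y, 0 < g y)
    (hfg : ∀ y, f y ≤ c * g y) (hgf : ∀ y, g y ≤ c * f y) (y : Y) :
    f y / ∫ z, f z ∂μ ≤ c ^ 2 * (g y / ∫ z, g z ∂μ) := by
  have hZf := integral_pos_of_forall_pos hμ hf hfpos
  have hZg := integral_pos_of_forall_pos hμ hg hgpos
  have hZgf : ∫ z, g z ∂μ ≤ c * ∫ z, f z ∂μ := by
    rw [← integral_const_mul]
    exact integral_mono hg (hf.const_mul c) hgf
  rw [mul_div_assoc', div_le_div_iff₀ hZf hZg]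
  calc f y * ∫ z, g z ∂μ ≤ (c * g y) * (c * ∫ z, f z ∂μ) :=
        mul_le_mul (hfg y) hZgf hZg.le ((hfpos y).le.trans (hfg y))
    _ = c ^ 2 * g y * ∫ z, f z ∂μ := by ring

lemma integral_abs_div_integral_sub_le (hμ : μ ≠ 0) (hf : Integrable f μ)
    (hg : Integrable g μ) (hfpos : ∀ y, 0 < f y) (hgpos : ∀ y, 0 < g y)
    (hfg : ∀ y, f y ≤ c * g y) (hgf : ∀ y, g y ≤ c * f y) :
    ∫ y, |f y / ∫ z, f z ∂μ - g y / ∫ z, g z ∂μ| ∂μ ≤ c ^ 2 - 1 := by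
  have hZf := integral_pos_of_forall_pos hμ hf hfpos
  have hZg := integral_pos_of_forall_pos hμ hg hgpos
  have hpointwise : ∀ y, |f y / ∫ z, f z ∂μ - g y / ∫ z, g z ∂μ|
      ≤ (c ^ 2 - 1) * (g y / ∫ z, g z ∂μ) := fun y =>
    abs_sub_le_sub_one_mul_of_le_mul (div_pos (hfpos y) hZf).le (div_pos (hgpos y) hZg).le
      (div_integral_le_sq_mul_div_integral hμ hf hg hfpos hgpos hfg hgf y)
      (div_integral_le_sq_mul_div_integral hμ hg hf hgpos hfpos hgf hfg y)
  calc ∫ y, |f y / ∫ z, f z ∂μ - g y / ∫ z, g z ∂μ| ∂μ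
      ≤ ∫ y, (c ^ 2 - 1) * (g y / ∫ z, g z ∂μ) ∂μ :=
        integral_mono ((hf.div_const _).sub (hg.div_const _)).abs
          ((hg.div_const _).const_mul _) hpointwise
    _ = c ^ 2 - 1 := by rw [integral_const_mul, integral_div, div_self hZg.ne', mul_one]

lemma abs_integral_mul_sub_integral_mul_le {p q h : Y → ℝ} {C : ℝ} (hp : Integrable p μ)
    (hq : Integrable q μ) (hh : AEStronglyMeasurable h μ) (hC : ∀ y, |h y| ≤ C) :
    |∫ y, h y * p y ∂μ - ∫ y, h y * q y ∂μ| ≤ C * ∫ y, |p y - q y| ∂μ := by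
  have hhC : ∀ᵐ y ∂μ, ‖h y‖ ≤ C := ae_of_all _ hC
  rw [← integral_sub (hp.bdd_mul hh hhC) (hq.bdd_mul hh hhC), ← integral_const_mul]
  refine abs_integral_le_integral_abs.trans <|
    integral_mono ((hp.bdd_mul hh hhC).sub (hq.bdd_mul hh hhC)).abs
      ((hp.sub hq).abs.const_mul C) fun y => ?_
  rw [← mul_sub, abs_mul]
  exact mul_le_mul_of_nonneg_right (hC y) (abs_nonneg _)

end Normalization

/-- Stability of Gibbs conditional kernels under potential perturbation:
if `k_i(x, dy) ∝ K(x,y) e^{ψ_i(y)} dλ(y)` with `sup_y |ψ₁ − ψ₂| ≤ ε`, then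
`sup_x ‖k₁(x,·) − k₂(x,·)‖_TV ≤ ε e^{2ε}` (total variation written as half the
`L¹(λ)` distance of the densities), and consequently integrals of any bounded
measurable `h` against the two kernels differ by at most `2 ‖h‖_∞ ε e^{2ε}`. -/
theorem gibbs_kernel_stability
    {X Y : Type*} [MeasurableSpace X] [MeasurableSpace Y]
    (lam : Measure Y) [IsFiniteMeasure lam] (hlam : lam ≠ 0)
    (K : X → Y → ℝ) (hKpos : ∀ x y, 0 < K x y)
    (CK : ℝ) (hKb : ∀ x y, K x y ≤ CK)
    (hKm : Measurable (Function.uncurry K))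
    (ψ₁ ψ₂ : Y → ℝ) (hψ₁m : Measurable ψ₁) (hψ₂m : Measurable ψ₂)
    (B₁ B₂ : ℝ) (hψ₁b : ∀ y, |ψ₁ y| ≤ B₁) (hψ₂b : ∀ y, |ψ₂ y| ≤ B₂)
    (ε : ℝ) (hε : ∀ y, |ψ₁ y - ψ₂ y| ≤ ε) :
    (∀ x, (1 / 2) * ∫ y,
        |K x y * Real.exp (ψ₁ y) / (∫ z, K x z * Real.exp (ψ₁ z) ∂lam)
          - K x y * Real.exp (ψ₂ y) / (∫ z, K x z * Real.exp (ψ₂ z) ∂lam)| ∂lam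
      ≤ ε * Real.exp (2 * ε))
    ∧ (∀ h : Y → ℝ, Measurable h → ∀ Ch : ℝ, (∀ y, |h y| ≤ Ch) →
      ∀ x,
        |(∫ y, h y * (K x y * Real.exp (ψ₁ y)
            / (∫ z, K x z * Real.exp (ψ₁ z) ∂lam)) ∂lam)
          - ∫ y, h y * (K x y * Real.exp (ψ₂ y)
            / (∫ z, K x z * Real.exp (ψ₂ z) ∂lam)) ∂lam|
        ≤ 2 * Ch * ε * Real.exp (2 * ε)) := by
  have : NeZero lam := ⟨hlam⟩
  obtain ⟨y₀⟩ := Measure.nonempty_of_neZero lam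
  have hint : ∀ x ψ, Measurable ψ → ∀ B, (∀ y, |ψ y| ≤ B) →
      Integrable (fun y => K x y * exp (ψ y)) lam := fun x ψ hψ B hB =>
    integrable_mul_exp_of_bounded (hKm.comp measurable_prodMk_left) hψ
      (fun y => (abs_of_pos (hKpos x y)).trans_le (hKb x y)) (fun y => (abs_le.1 (hB y)).2)
  have hpos : ∀ x (ψ : Y → ℝ) y, 0 < K x y * exp (ψ y) := fun x _ y =>
    mul_pos (hKpos x y) (exp_pos _)
  have hdom : ∀ x {φ χ : Y → ℝ}, (∀ y, |φ y - χ y| ≤ ε) →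
      ∀ y, K x y * exp (φ y) ≤ exp ε * (K x y * exp (χ y)) := fun x _ _ hφχ y =>
    mul_exp_le_exp_mul_mul_exp (hKpos x y).le (hφχ y)
  have hL1 : ∀ x, ∫ y, |K x y * exp (ψ₁ y) / (∫ z, K x z * exp (ψ₁ z) ∂lam)
      - K x y * exp (ψ₂ y) / (∫ z, K x z * exp (ψ₂ z) ∂lam)| ∂lam ≤ 2 * ε * exp (2 * ε) := by
    intro x
    refine (integral_abs_div_integral_sub_le hlam (hint x ψ₁ hψ₁m B₁ hψ₁b)
      (hint x ψ₂ hψ₂m B₂ hψ₂b) (hpos x ψ₁) (hpos x ψ₂) (hdom x hε)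
      (hdom x fun y => (abs_sub_comm _ _).trans_le (hε y))).trans ?_
    rw [← exp_nat_mul, Nat.cast_ofNat]
    exact exp_sub_one_le_mul_exp _
  refine ⟨fun x => by linarith [hL1 x], fun h hh Ch hCh x => ?_⟩
  have hCh₀ : 0 ≤ Ch := (abs_nonneg _).trans (hCh y₀)
  calc _ ≤ Ch * _ := abs_integral_mul_sub_integral_mul_le
          ((hint x ψ₁ hψ₁m B₁ hψ₁b).div_const _) ((hint x ψ₂ hψ₂m B₂ hψ₂b).div_const _)
          hh.aestronglyMeasurable hCh
    _ ≤ Ch * (2 * ε * exp (2 * ε)) := mul_le_mul_of_nonneg_left (hL1 x) hCh₀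
    _ = 2 * Ch * ε * exp (2 * ε) := by ring
end

section
/- Let π_t and π̃_t be probability measures on a measurable space Ω, set ε_t := ‖π_t − π̃_t‖_TV, and let F : [0,1] × Ω → ℝ be bounded measurable with ‖F(s, ·)‖_∞ ≤ C_ab for all s and sup_ω |F(r, ω) − F(s, ω)| ≤ L_ab |r − s| for all r, s. Fix t and δ ∈ (0, 1] with t + δ ≤ 1, let π_{t+δ} be the Gibbs tilt of π_t by ∫_t^{t+δ} F(r, ·) dr and let π̃_{t+δ} be the Gibbs tilt of π̃_t by δ F(t, ·). Then ε_{t+δ} := ‖π_{t+δ} − π̃_{t+δ}‖_TV ≤ (1 + C₂ δ) ε_t + C₁ δ², where C₁ := (1/2) L_ab e^{L_ab} and C₂ := 4 C_ab e^{2 C_ab}. -/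
/-!
Insert the semi-discrete coupling `π_t` tilted by the frozen potential `δ F(t, ·)` and use the
triangle inequality. Against the exact update the base measure is the same and the potentials
differ by at most `L_ab δ² / 2` (Lipschitz continuity in time), so the two densities agree up to
a factor `e^{L_ab δ²}`. Against the frozen update of `π̃_t` the potential is the same and bounded
by `C_ab δ`: the tilting density is at most `e^{2 C_ab δ}`, and the two normalisers differ by at
most `2 (e^{C_ab δ} - 1) ε_t`, so the error `ε_t` is amplified only by a factor `1 + O(δ)`.
-/

open MeasureTheory

/-- Total variation distance `(1/2) ∫ |dP/dλ − dQ/dλ| dλ` with the common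
dominating measure `λ = P + Q`. -/
noncomputable def tvDist {Ω : Type*} [MeasurableSpace Ω]
    (P Q : Measure Ω) : ℝ :=
  (1 / 2) * ∫ ω, |(P.rnDeriv (P + Q) ω).toReal
    - (Q.rnDeriv (P + Q) ω).toReal| ∂(P + Q)

/-- The Gibbs tilt of `π` by `G`: the probability measure with density
`e^G / ∫ e^G dπ` with respect to `π`. -/
noncomputable def gibbsTilt {Ω : Type*} [MeasurableSpace Ω]
    (π : Measure Ω) (G : Ω → ℝ) : Measure Ω :=
  π.withDensity fun ω =>
    ENNReal.ofReal (Real.exp (G ω) / ∫ ω', Real.exp (G ω') ∂π)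

open Real

theorem abs_sub_le_of_le_mul_of_le_mul {x y K : ℝ} (hK : 0 < K) (hy : 0 ≤ y) (hxy : x ≤ K * y)
    (hyx : y ≤ K * x) : |x - y| ≤ (K - 1) * y := by
  rw [abs_sub_le_iff]
  constructor
  · linarith
  · nlinarith [sq_nonneg (K - 1)]

theorem abs_exp_sub_one_le_exp_sub_one {x c : ℝ} (hx : |x| ≤ c) : |exp x - 1| ≤ exp c - 1 := by
  have hlow : exp (-c) ≤ exp x := exp_le_exp.2 (neg_le_of_abs_le hx)
  have hup : exp x ≤ exp c := exp_le_exp.2 (le_of_abs_le hx)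
  rw [abs_le]
  constructor <;> linarith [add_one_le_exp c, add_one_le_exp (-c)]

theorem exp_sub_one_le_mul_exp_of_le {x y : ℝ} (hx : 0 ≤ x) (hxy : x ≤ y) :
    exp x - 1 ≤ x * exp y := by
  have h := mul_le_mul_of_nonneg_left (one_sub_le_exp_neg x) (exp_pos x).le
  rw [← exp_add, add_neg_cancel, exp_zero] at h
  nlinarith [exp_le_exp.2 hxy]

theorem exp_mul_sq_sub_one_le {L δ : ℝ} (hL : 0 ≤ L) (hδ0 : 0 ≤ δ) (hδ1 : δ ≤ 1) :
    exp (L * δ ^ 2) - 1 ≤ L * exp L * δ ^ 2 := by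
  have h := exp_sub_one_le_mul_exp_of_le (by positivity)
    (mul_le_of_le_one_right hL (pow_le_one₀ (n := 2) hδ0 hδ1))
  linarith

theorem exp_mul_mul_two_exp_mul_sub_one_le {C δ : ℝ} (hC : 0 ≤ C) (hδ0 : 0 ≤ δ) (hδ1 : δ ≤ 1) :
    exp (C * δ) * (2 * exp (C * δ) - 1) ≤ 1 + 4 * C * exp (2 * C) * δ := by
  have h := exp_sub_one_le_mul_exp_of_le (x := 2 * (C * δ)) (y := 2 * C) (by positivity)
    (by nlinarith)
  rw [two_mul (C * δ), exp_add] at h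
  nlinarith [one_le_exp (mul_nonneg hC hδ0)]

theorem abs_intervalIntegral_sub_mul_le {f : ℝ → ℝ} {a b L : ℝ} (hab : a ≤ b)
    (hf : ∀ r ∈ Set.Icc a b, ∀ s ∈ Set.Icc a b, |f r - f s| ≤ L * |r - s|) :
    |(∫ r in a..b, f r) - (b - a) * f a| ≤ L * (b - a) ^ 2 / 2 := by
  have hfi : IntervalIntegrable f volume a b := by
    refine ContinuousOn.intervalIntegrable ?_
    rw [Set.uIcc_of_le hab]
    exact (LipschitzOnWith.of_dist_le' hf).continuousOn
  rw [← smul_eq_mul, ← intervalIntegral.integral_const,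
    ← intervalIntegral.integral_sub hfi intervalIntegrable_const, ← Real.norm_eq_abs]
  calc ‖∫ r in a..b, (f r - f a)‖ ≤ ∫ r in a..b, L * (r - a) :=
        intervalIntegral.norm_integral_le_of_norm_le hab
          (ae_of_all _ fun r hr => by
            simpa [abs_of_nonneg (sub_nonneg.2 hr.1.le)] using
              hf r (Set.Ioc_subset_Icc_self hr) a (Set.left_mem_Icc.2 hab))
          ((by fun_prop : Continuous fun r => L * (r - a)).intervalIntegrable _ _)
    _ = L * (b - a) ^ 2 / 2 := by
        rw [intervalIntegral.integral_const_mul, intervalIntegral.integral_comp_sub_right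
          (fun r => r), integral_id]
        ring

section Measure

variable {Ω : Type*} [MeasurableSpace Ω]

theorem measurable_intervalIntegral_of_measurable_uncurry {F : ℝ → Ω → ℝ}
    (hF : Measurable (Function.uncurry F)) (a b : ℝ) :
    Measurable fun ω => ∫ r in a..b, F r ω :=
  -- `∫ r in a..b` is by definition the integral over `Ioc a b` minus the one over `Ioc b a`.
  (hF.stronglyMeasurable.integral_prod_left (μ := volume.restrict (Set.Ioc a b))).measurable.sub
    (hF.stronglyMeasurable.integral_prod_left (μ := volume.restrict (Set.Ioc b a))).measurable

theorem tvDist_nonneg (P Q : Measure Ω) : 0 ≤ tvDist P Q :=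
  mul_nonneg (by norm_num) (integral_nonneg fun _ => abs_nonneg _)

theorem tvDist_eq_integral_rnDeriv {P Q μ : Measure Ω} [SigmaFinite P] [SigmaFinite Q]
    [SigmaFinite μ] (hP : P ≪ μ) (hQ : Q ≪ μ) :
    tvDist P Q = 1 / 2 * ∫ ω, |(P.rnDeriv μ ω).toReal - (Q.rnDeriv μ ω).toReal| ∂μ := by
  rw [tvDist, ← integral_rnDeriv_smul (hP.add_left hQ)]
  congr 1
  refine integral_congr_ae ?_
  filter_upwards [Measure.rnDeriv_mul_rnDeriv (ν := P + Q) (κ := μ)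
      (Measure.AbsolutelyContinuous.rfl.add_right Q),
    Measure.rnDeriv_mul_rnDeriv (ν := P + Q) (κ := μ)
      (Measure.AbsolutelyContinuous.rfl.add_right' P)] with ω hp hq
  rw [← hp, ← hq]
  simp only [Pi.mul_apply, ENNReal.toReal_mul, smul_eq_mul, ← sub_mul, abs_mul,
    abs_of_nonneg (ENNReal.toReal_nonneg (a := (P + Q).rnDeriv μ ω))]
  ring

theorem tvDist_triangle (P Q R : Measure Ω) [IsFiniteMeasure P] [IsFiniteMeasure Q]
    [IsFiniteMeasure R] : tvDist P R ≤ tvDist P Q + tvDist Q R := by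
  set μ := P + Q + R
  have hP : P ≪ μ := (Measure.AbsolutelyContinuous.rfl.add_right Q).add_right R
  have hQ : Q ≪ μ := (Measure.AbsolutelyContinuous.rfl.add_right' P).add_right R
  have hR : R ≪ μ := Measure.AbsolutelyContinuous.rfl.add_right' (P + Q)
  have hint : ∀ (A B : Measure Ω) [IsFiniteMeasure A] [IsFiniteMeasure B],
      Integrable (fun ω => |(A.rnDeriv μ ω).toReal - (B.rnDeriv μ ω).toReal|) μ :=
    fun A B _ _ => (Measure.integrable_toReal_rnDeriv.sub Measure.integrable_toReal_rnDeriv).abs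
  rw [tvDist_eq_integral_rnDeriv hP hR, tvDist_eq_integral_rnDeriv hP hQ,
    tvDist_eq_integral_rnDeriv hQ hR, ← mul_add, ← integral_add (hint P Q) (hint Q R)]
  gcongr 1 / 2 * ?_
  exact integral_mono (hint P R) ((hint P Q).add (hint Q R)) fun ω => abs_sub_le _ _ _

theorem abs_integral_sub_integral_le_tvDist (P Q : Measure Ω) [IsFiniteMeasure P]
    [IsFiniteMeasure Q] {f : Ω → ℝ} {k : ℝ} (hf : Measurable f) (hfk : ∀ ω, |f ω| ≤ k) :
    |∫ ω, f ω ∂P - ∫ ω, f ω ∂Q| ≤ 2 * k * tvDist P Q := by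
  have hP : P ≪ P + Q := Measure.AbsolutelyContinuous.rfl.add_right Q
  have hQ : Q ≪ P + Q := Measure.AbsolutelyContinuous.rfl.add_right' P
  have hfi : ∀ (R : Measure Ω) [IsFiniteMeasure R], Integrable f R :=
    fun R _ => .of_bound hf.aestronglyMeasurable k (ae_of_all _ hfk)
  rw [tvDist, ← integral_rnDeriv_smul hP, ← integral_rnDeriv_smul hQ,
    ← integral_sub ((integrable_rnDeriv_smul_iff hP).2 (hfi P))
      ((integrable_rnDeriv_smul_iff hQ).2 (hfi Q)), ← mul_assoc,
    show 2 * k * (1 / 2) = k by ring, ← integral_const_mul, ← Real.norm_eq_abs]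
  refine norm_integral_le_of_norm_le
    (((Measure.integrable_toReal_rnDeriv (μ := P)).sub
      (Measure.integrable_toReal_rnDeriv (μ := Q))).abs.const_mul k)
    (ae_of_all _ fun ω => ?_)
  rw [Real.norm_eq_abs, ← sub_smul, smul_eq_mul, abs_mul, mul_comm k]
  exact mul_le_mul_of_nonneg_left (hfk ω) (abs_nonneg _)

theorem tvDist_withDensity_ofReal (μ : Measure Ω) [SigmaFinite μ] {u v : Ω → ℝ}
    (hu : AEMeasurable u μ) (hv : AEMeasurable v μ) (hu0 : 0 ≤ᵐ[μ] u) (hv0 : 0 ≤ᵐ[μ] v) :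
    tvDist (μ.withDensity fun ω => ENNReal.ofReal (u ω))
      (μ.withDensity fun ω => ENNReal.ofReal (v ω)) = 1 / 2 * ∫ ω, |u ω - v ω| ∂μ := by
  rw [tvDist_eq_integral_rnDeriv (withDensity_absolutelyContinuous _ _)
    (withDensity_absolutelyContinuous _ _)]
  congr 1
  refine integral_congr_ae ?_
  filter_upwards [Measure.rnDeriv_withDensity₀ μ hu.ennreal_ofReal,
    Measure.rnDeriv_withDensity₀ μ hv.ennreal_ofReal, hu0, hv0] with ω hu hv hu0 hv0
  rw [hu, hv, ENNReal.toReal_ofReal hu0, ENNReal.toReal_ofReal hv0]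

theorem tvDist_withDensity_le_mul (μ ν : Measure Ω) [IsFiniteMeasure μ] [IsFiniteMeasure ν]
    {f : Ω → ℝ} {K : ℝ} (hf : Measurable f) (hf0 : ∀ ω, 0 ≤ f ω) (hfK : ∀ ω, f ω ≤ K) :
    tvDist (μ.withDensity fun ω => ENNReal.ofReal (f ω))
      (ν.withDensity fun ω => ENNReal.ofReal (f ω)) ≤ K * tvDist μ ν := by
  have hμ : μ ≪ μ + ν := Measure.AbsolutelyContinuous.rfl.add_right ν
  have hν : ν ≪ μ + ν := Measure.AbsolutelyContinuous.rfl.add_right' μ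
  have hdens : ∀ ξ : Measure Ω, [IsFiniteMeasure ξ] →
      (fun ω => ((ξ.withDensity fun ω => ENNReal.ofReal (f ω)).rnDeriv (μ + ν) ω).toReal)
        =ᵐ[μ + ν] fun ω => f ω * (ξ.rnDeriv (μ + ν) ω).toReal := fun ξ _ => by
    filter_upwards [Measure.rnDeriv_withDensity_left hf.ennreal_ofReal.aemeasurable
      (ae_of_all ξ fun _ => ENNReal.ofReal_ne_top)] with ω hω
    rw [hω, ENNReal.toReal_mul, ENNReal.toReal_ofReal (hf0 ω)]
  rw [tvDist_eq_integral_rnDeriv ((withDensity_absolutelyContinuous _ _).trans hμ)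
    ((withDensity_absolutelyContinuous _ _).trans hν), tvDist, mul_left_comm K,
    ← integral_const_mul K]
  gcongr 1 / 2 * ?_
  refine integral_mono_of_nonneg (ae_of_all _ fun _ => abs_nonneg _)
    ((Measure.integrable_toReal_rnDeriv.sub Measure.integrable_toReal_rnDeriv).abs.const_mul K) ?_
  filter_upwards [hdens μ, hdens ν] with ω hμω hνω
  rw [hμω, hνω, ← mul_sub, abs_mul, abs_of_nonneg (hf0 ω)]
  exact mul_le_mul_of_nonneg_right (hfK ω) (abs_nonneg _)

theorem gibbsTilt_eq_tilted (μ : Measure Ω) (G : Ω → ℝ) : gibbsTilt μ G = μ.tilted G := rfl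

theorem integrable_exp_of_le {μ : Measure Ω} [IsFiniteMeasure μ] {G : Ω → ℝ} {c : ℝ}
    (hG : AEMeasurable G μ) (hGc : ∀ ω, G ω ≤ c) : Integrable (fun ω => exp (G ω)) μ :=
  .of_bound (measurable_exp.comp_aemeasurable hG).aestronglyMeasurable (exp c)
    (ae_of_all _ fun ω => by simpa using hGc ω)

theorem exp_le_integral_exp {μ : Measure Ω} [IsProbabilityMeasure μ] {G : Ω → ℝ} {c : ℝ}
    (hG : Integrable (fun ω => exp (G ω)) μ) (hcG : ∀ ω, c ≤ G ω) :
    exp c ≤ ∫ ω, exp (G ω) ∂μ := by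
  simpa using integral_mono (integrable_const (exp c)) hG fun ω => exp_le_exp.2 (hcG ω)

theorem integral_exp_le_exp_mul_integral_exp {μ : Measure Ω} {G H : Ω → ℝ} {η : ℝ}
    (hG : Integrable (fun ω => exp (G ω)) μ) (hH : Integrable (fun ω => exp (H ω)) μ)
    (hHG : ∀ ω, H ω ≤ G ω + η) :
    ∫ ω, exp (H ω) ∂μ ≤ exp η * ∫ ω, exp (G ω) ∂μ := by
  rw [← integral_const_mul]
  refine integral_mono hH (hG.const_mul _) fun ω => ?_
  rw [← exp_add]
  exact exp_le_exp.2 (by linarith [hHG ω])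

theorem exp_div_integral_exp_le {μ : Measure Ω} [NeZero μ] {G H : Ω → ℝ} {η : ℝ}
    (hG : Integrable (fun ω => exp (G ω)) μ) (hH : Integrable (fun ω => exp (H ω)) μ)
    (hGH : ∀ ω, |G ω - H ω| ≤ η) (ω : Ω) :
    exp (G ω) / ∫ ω, exp (G ω) ∂μ ≤ exp (2 * η) * (exp (H ω) / ∫ ω, exp (H ω) ∂μ) := by
  have hZ := integral_exp_le_exp_mul_integral_exp hG hH fun ω => by
    linarith [(abs_le.1 (hGH ω)).1]
  have hexp : exp (G ω) ≤ exp η * exp (H ω) := by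
    rw [← exp_add]
    exact exp_le_exp.2 (by linarith [(abs_le.1 (hGH ω)).2])
  set ZG := ∫ ω, exp (G ω) ∂μ
  set ZH := ∫ ω, exp (H ω) ∂μ
  rw [div_le_iff₀ (integral_exp_pos hG), mul_div_assoc', div_mul_eq_mul_div,
    le_div_iff₀ (integral_exp_pos hH)]
  calc exp (G ω) * ZH ≤ (exp η * exp (H ω)) * (exp η * ZG) :=
        mul_le_mul hexp hZ (integral_exp_pos hH).le (by positivity)
    _ = exp (2 * η) * exp (H ω) * ZG := by rw [two_mul, exp_add]; ring

theorem tvDist_tilted_le_of_abs_sub_le {μ : Measure Ω} [IsProbabilityMeasure μ]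
    {G H : Ω → ℝ} {η : ℝ}
    (hG : Integrable (fun ω => exp (G ω)) μ) (hH : Integrable (fun ω => exp (H ω)) μ)
    (hGH : ∀ ω, |G ω - H ω| ≤ η) :
    tvDist (μ.tilted G) (μ.tilted H) ≤ (exp (2 * η) - 1) / 2 := by
  have hHG : ∀ ω, |H ω - G ω| ≤ η := fun ω => abs_sub_comm (G ω) (H ω) ▸ hGH ω
  set ZH := ∫ ω, exp (H ω) ∂μ
  rw [Measure.tilted, Measure.tilted, tvDist_withDensity_ofReal μ
    (hG.1.aemeasurable.div_const _) (hH.1.aemeasurable.div_const _)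
    (ae_of_all _ fun _ => by positivity) (ae_of_all _ fun _ => by positivity)]
  calc 1 / 2 * ∫ ω, |exp (G ω) / (∫ ω, exp (G ω) ∂μ) - exp (H ω) / ZH| ∂μ
      ≤ 1 / 2 * ∫ ω, (exp (2 * η) - 1) * (exp (H ω) / ZH) ∂μ := by
        gcongr 1 / 2 * ?_
        refine integral_mono_of_nonneg (ae_of_all _ fun _ => abs_nonneg _)
          ((hH.div_const ZH).const_mul _)
          (ae_of_all _ fun ω => abs_sub_le_of_le_mul_of_le_mul (exp_pos _) (by positivity)
            (exp_div_integral_exp_le hG hH hGH ω) (exp_div_integral_exp_le hH hG hHG ω))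
    _ = (exp (2 * η) - 1) / 2 := by
        rw [integral_const_mul, integral_div, div_self (integral_exp_pos hH).ne']
        ring

theorem abs_integral_exp_sub_integral_exp_le (μ ν : Measure Ω) [IsProbabilityMeasure μ]
    [IsProbabilityMeasure ν] {H : Ω → ℝ} {c : ℝ} (hH : Measurable H) (hHc : ∀ ω, |H ω| ≤ c) :
    |∫ ω, exp (H ω) ∂ν - ∫ ω, exp (H ω) ∂μ| ≤ 2 * (exp c - 1) * tvDist μ ν := by
  have hint : ∀ (ξ : Measure Ω) [IsFiniteMeasure ξ], Integrable (fun ω => exp (H ω)) ξ :=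
    fun ξ _ => integrable_exp_of_le hH.aemeasurable fun ω => le_of_abs_le (hHc ω)
  have h := abs_integral_sub_integral_le_tvDist μ ν (hH.exp.sub_const 1)
    fun ω => abs_exp_sub_one_le_exp_sub_one (hHc ω)
  rwa [integral_sub (hint μ) (integrable_const 1), integral_sub (hint ν) (integrable_const 1),
    integral_const, integral_const, probReal_univ, probReal_univ, sub_sub_sub_cancel_right,
    abs_sub_comm] at h

theorem tvDist_withDensity_div_tilted (ν : Measure Ω) [SigmaFinite ν] [NeZero ν] {H : Ω → ℝ}
    (hH : Integrable (fun ω => exp (H ω)) ν) {Z : ℝ} (hZ : 0 < Z) :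
    tvDist (ν.withDensity fun ω => ENNReal.ofReal (exp (H ω) / Z)) (ν.tilted H)
      = |∫ ω, exp (H ω) ∂ν - Z| / (2 * Z) := by
  set Z' := ∫ ω, exp (H ω) ∂ν
  have hZ' : 0 < Z' := integral_exp_pos hH
  rw [Measure.tilted, tvDist_withDensity_ofReal ν (hH.1.aemeasurable.div_const Z)
    (hH.1.aemeasurable.div_const Z') (ae_of_all _ fun _ => by positivity)
    (ae_of_all _ fun _ => by positivity)]
  have hpoint : ∀ ω, |exp (H ω) / Z - exp (H ω) / Z'| = |1 / Z - 1 / Z'| * exp (H ω) :=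
    fun ω => by
      rw [← mul_one_div (exp _), ← mul_one_div (exp _), ← mul_sub, abs_mul,
        abs_of_pos (exp_pos _), mul_comm]
  simp_rw [hpoint]
  rw [integral_const_mul, div_sub_div _ _ hZ.ne' hZ'.ne', abs_div, abs_of_pos (mul_pos hZ hZ')]
  field_simp
  ring

theorem tvDist_tilted_le_mul_tvDist (μ ν : Measure Ω)
    [IsProbabilityMeasure μ] [IsProbabilityMeasure ν] {H : Ω → ℝ} {c : ℝ} (hH : Measurable H)
    (hHc : ∀ ω, |H ω| ≤ c) :
    tvDist (μ.tilted H) (ν.tilted H) ≤ exp c * (2 * exp c - 1) * tvDist μ ν := by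
  obtain ⟨ω₀⟩ := nonempty_of_isProbabilityMeasure μ
  have hc : 0 ≤ c := (abs_nonneg _).trans (hHc ω₀)
  have hint : ∀ (ξ : Measure Ω) [IsFiniteMeasure ξ], Integrable (fun ω => exp (H ω)) ξ :=
    fun ξ _ => integrable_exp_of_le hH.aemeasurable fun ω => le_of_abs_le (hHc ω)
  set Z := ∫ ω, exp (H ω) ∂μ
  have hZ : exp (-c) ≤ Z := exp_le_integral_exp (hint μ) fun ω => neg_le_of_abs_le (hHc ω)
  have hZpos : 0 < Z := (exp_pos _).trans_le hZ
  -- `ν'` is `ν` weighted by the (normalised) density of `μ.tilted H`.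
  set ν' := ν.withDensity fun ω => ENNReal.ofReal (exp (H ω) / Z)
  have := isProbabilityMeasure_tilted (hint μ)
  have := isProbabilityMeasure_tilted (hint ν)
  have : IsFiniteMeasure ν' := isFiniteMeasure_withDensity_ofReal ((hint ν).div_const Z).2
  have hreweight : tvDist (μ.tilted H) ν' ≤ exp c / Z * tvDist μ ν :=
    tvDist_withDensity_le_mul μ ν (hH.exp.div_const Z) (fun ω => by positivity)
      fun ω => div_le_div_of_nonneg_right (exp_le_exp.2 (le_of_abs_le (hHc ω))) hZpos.le
  calc tvDist (μ.tilted H) (ν.tilted H) ≤ tvDist (μ.tilted H) ν' + tvDist ν' (ν.tilted H) :=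
        tvDist_triangle _ _ _
    _ ≤ exp c / Z * tvDist μ ν + 2 * (exp c - 1) * tvDist μ ν / (2 * Z) := by
        rw [tvDist_withDensity_div_tilted ν (hint ν) hZpos]
        gcongr
        exact abs_integral_exp_sub_integral_exp_le μ ν hH hHc
    _ = (2 * exp c - 1) * tvDist μ ν / Z := by field_simp; ring
    _ ≤ (2 * exp c - 1) * tvDist μ ν / exp (-c) :=
        div_le_div_of_nonneg_left
          (mul_nonneg (by linarith [one_le_exp hc]) (tvDist_nonneg μ ν)) (exp_pos _) hZ
    _ = exp c * (2 * exp c - 1) * tvDist μ ν := by rw [exp_neg, div_inv_eq_mul]; ring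

theorem tvDist_tilted_le_add (μ ν : Measure Ω) [IsProbabilityMeasure μ] [IsProbabilityMeasure ν]
    {G H : Ω → ℝ} {c η : ℝ} (hG : Measurable G) (hH : Measurable H) (hHc : ∀ ω, |H ω| ≤ c)
    (hGH : ∀ ω, |G ω - H ω| ≤ η) :
    tvDist (μ.tilted G) (ν.tilted H)
      ≤ (exp (2 * η) - 1) / 2 + exp c * (2 * exp c - 1) * tvDist μ ν := by
  have hHi : ∀ (ξ : Measure Ω) [IsFiniteMeasure ξ], Integrable (fun ω => exp (H ω)) ξ :=
    fun ξ _ => integrable_exp_of_le hH.aemeasurable fun ω => le_of_abs_le (hHc ω)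
  have hGi : Integrable (fun ω => exp (G ω)) μ := integrable_exp_of_le (c := η + c)
    hG.aemeasurable fun ω => by linarith [le_of_abs_le (hGH ω), le_of_abs_le (hHc ω)]
  have := isProbabilityMeasure_tilted hGi
  have := isProbabilityMeasure_tilted (hHi μ)
  have := isProbabilityMeasure_tilted (hHi ν)
  calc tvDist (μ.tilted G) (ν.tilted H)
      ≤ tvDist (μ.tilted G) (μ.tilted H) + tvDist (μ.tilted H) (ν.tilted H) :=
        tvDist_triangle _ _ _
    _ ≤ _ := add_le_add (tvDist_tilted_le_of_abs_sub_le hGi (hHi μ) hGH)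
        (tvDist_tilted_le_mul_tvDist μ ν hH hHc)

end Measure

/-- Recursive error accumulation: one exact Gibbs update of `π_t` by
`∫ₜ^{t+δ} F_r dr` versus one frozen (Euler) update of `π̃_t` by `δ F_t`
satisfies `ε_{t+δ} ≤ (1 + C₂δ) ε_t + C₁δ²` in total variation, where
`C₁ = (1/2) L_ab e^{L_ab}` and `C₂ = 4 C_ab e^{2C_ab}`. -/
theorem error_recursion
    {Ω : Type*} [MeasurableSpace Ω]
    (πt πt' : Measure Ω) [IsProbabilityMeasure πt] [IsProbabilityMeasure πt']
    (F : ℝ → Ω → ℝ) (hFm : Measurable (Function.uncurry F))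
    (Cab : ℝ) (hFb : ∀ s ∈ Set.Icc (0:ℝ) 1, ∀ ω, |F s ω| ≤ Cab)
    (Lab : ℝ)
    (hFlip : ∀ r ∈ Set.Icc (0:ℝ) 1, ∀ s ∈ Set.Icc (0:ℝ) 1, ∀ ω,
      |F r ω - F s ω| ≤ Lab * |r - s|)
    (t δ : ℝ) (ht0 : 0 ≤ t) (hδ0 : 0 < δ) (hδ1 : δ ≤ 1) (htδ : t + δ ≤ 1) :
    tvDist (gibbsTilt πt fun ω => ∫ r in t..(t + δ), F r ω)
        (gibbsTilt πt' fun ω => δ * F t ω)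
      ≤ (1 + (4 * Cab * Real.exp (2 * Cab)) * δ) * tvDist πt πt'
        + ((1 / 2) * Lab * Real.exp Lab) * δ ^ 2 := by
  obtain ⟨ω₀⟩ := nonempty_of_isProbabilityMeasure πt
  have hwindow : Set.uIcc t (t + δ) ⊆ Set.Icc 0 1 := by
    rw [Set.uIcc_of_le (by linarith)]
    exact Set.Icc_subset_Icc ht0 htδ
  have ht : t ∈ Set.Icc (0:ℝ) 1 := hwindow Set.left_mem_uIcc
  have hCab : 0 ≤ Cab := (abs_nonneg _).trans (hFb t ht ω₀)
  have hLab : 0 ≤ Lab := by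
    simpa using (abs_nonneg _).trans (hFlip 0 (by simp) 1 (by simp) ω₀)
  have hHb : ∀ ω, |δ * F t ω| ≤ Cab * δ := fun ω => by
    rw [abs_mul, abs_of_pos hδ0, mul_comm]
    exact mul_le_mul_of_nonneg_right (hFb t ht ω) hδ0.le
  have hGH : ∀ ω, |(∫ r in t..(t + δ), F r ω) - δ * F t ω| ≤ Lab * δ ^ 2 / 2 := fun ω => by
    have h := abs_intervalIntegral_sub_mul_le (f := fun r => F r ω) (by linarith)
      fun r hr s hs => hFlip r (hwindow (Set.Icc_subset_uIcc hr)) s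
        (hwindow (Set.Icc_subset_uIcc hs)) ω
    rwa [add_sub_cancel_left] at h
  rw [gibbsTilt_eq_tilted, gibbsTilt_eq_tilted]
  refine (tvDist_tilted_le_add πt πt' (measurable_intervalIntegral_of_measurable_uncurry hFm _ _)
    (measurable_const.mul (hFm.comp measurable_prodMk_left)) hHb hGH).trans ?_
  rw [mul_div_cancel₀ _ two_ne_zero]
  nlinarith [exp_mul_sq_sub_one_le hLab hδ0.le hδ1,
    exp_mul_mul_two_exp_mul_sub_one_le hCab hδ0.le hδ1, tvDist_nonneg πt πt']
end

section
/- Let Ω be a measurable space and let π, π̃ be probability measures on Ω with ‖π − π̃‖_TV ≤ ε. Let G, Ḡ : Ω → ℝ be measurable with ‖G‖_∞ ≤ c, ‖Ḡ‖_∞ ≤ c, and ‖G − Ḡ‖_∞ ≤ η. Let p : Ω → ℝ be measurable with 0 < p_min ≤ p(ω) ≤ p_max for all ω, and let v : Ω → ℝ^m be measurable with ‖v(ω)‖ ≤ C_v for all ω. Define β := (∫ v p e^G dπ) / (∫ p e^G dπ) and β̃ := (∫ v p e^{Ḡ} dπ̃) / (∫ p e^{Ḡ} dπ̃). Then there exists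 a constant K < ∞, depending only on C_v, p_min, p_max, and c, such that ‖β − β̃‖ ≤ K (η + ε). -/
open MeasureTheory

lemma aux_integrable_bdd {Ω : Type*} [MeasurableSpace Ω] (μ : Measure Ω) [IsFiniteMeasure μ]
    {E : Type*} [NormedAddCommGroup E] [MeasurableSpace E] [BorelSpace E] [SecondCountableTopology E]
    {f : Ω → E} (hf : Measurable f)
    (C : ℝ) (h : ∀ ω, ‖f ω‖ ≤ C) : Integrable f μ :=
  (integrable_const C).mono' hf.aestronglyMeasurable (Filter.Eventually.of_forall h)

lemma aux_exp_lip {c x y : ℝ} (hx : |x| ≤ c) (hy : |y| ≤ c) :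
    |Real.exp x - Real.exp y| ≤ Real.exp c * |x - y| := by
  have key : ∀ u w : ℝ, u ≤ w → |w| ≤ c →
      Real.exp w - Real.exp u ≤ Real.exp c * (w - u) := by
    intro u w huw hw
    have h1 : (u - w) + 1 ≤ Real.exp (u - w) := Real.add_one_le_exp _
    have h2 : Real.exp w * Real.exp (u - w) = Real.exp u := by
      rw [← Real.exp_add]; ring_nf
    have h3 : Real.exp w ≤ Real.exp c := Real.exp_le_exp.mpr (le_of_abs_le hw)
    have h4 : 0 < Real.exp w := Real.exp_pos _
    nlinarith
  rcases le_total x y with h | h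
  · have := key x y h hy
    rw [abs_of_nonpos (by nlinarith [Real.exp_le_exp.mpr h] : Real.exp x - Real.exp y ≤ 0),
      abs_of_nonpos (by linarith : x - y ≤ 0)]
    linarith
  · have := key y x h hx
    rw [abs_of_nonneg (by nlinarith [Real.exp_le_exp.mpr h] : 0 ≤ Real.exp x - Real.exp y),
      abs_of_nonneg (by linarith : 0 ≤ x - y)]
    linarith

lemma aux_tv_bound {Ω : Type*} [MeasurableSpace Ω] (π π' : Measure Ω)
    [IsFiniteMeasure π] [IsFiniteMeasure π']
    {E : Type*} [NormedAddCommGroup E] [NormedSpace ℝ E] [MeasurableSpace E]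
    [BorelSpace E] [SecondCountableTopology E]
    {f : Ω → E} (hf : Measurable f) (M : ℝ) (hM0 : 0 ≤ M) (hM : ∀ ω, ‖f ω‖ ≤ M) :
    ‖∫ ω, f ω ∂π - ∫ ω, f ω ∂π'‖ ≤ 2 * M * tvDist π π' := by
  set lam := π + π' with hlam
  have h1 : π ≪ lam := Measure.absolutelyContinuous_of_le (Measure.le_add_right le_rfl)
  have h2 : π' ≪ lam := Measure.absolutelyContinuous_of_le (Measure.le_add_left le_rfl)
  set g : Ω → ℝ := fun ω => (π.rnDeriv lam ω).toReal with hg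
  set g' : Ω → ℝ := fun ω => (π'.rnDeriv lam ω).toReal with hg'
  have hgm : Measurable g := (Measure.measurable_rnDeriv π lam).ennreal_toReal
  have hg'm : Measurable g' := (Measure.measurable_rnDeriv π' lam).ennreal_toReal
  have hgi : Integrable g lam := Measure.integrable_toReal_rnDeriv
  have hg'i : Integrable g' lam := Measure.integrable_toReal_rnDeriv
  have hrw1 : ∫ ω, f ω ∂π = ∫ ω, g ω • f ω ∂lam := (integral_rnDeriv_smul h1).symm
  have hrw2 : ∫ ω, f ω ∂π' = ∫ ω, g' ω • f ω ∂lam := (integral_rnDeriv_smul h2).symm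
  have hbnd : ∀ (h : Ω → ℝ), (∀ ω, 0 ≤ h ω) → Measurable h → Integrable h lam →
      Integrable (fun ω => h ω • f ω) lam := by
    intro h hpos hm hi
    refine (hi.const_mul M).mono' (hm.smul hf).aestronglyMeasurable
      (Filter.Eventually.of_forall fun ω => ?_)
    rw [norm_smul, Real.norm_eq_abs, abs_of_nonneg (hpos ω)]
    calc h ω * ‖f ω‖ ≤ h ω * M := by
            exact mul_le_mul_of_nonneg_left (hM ω) (hpos ω)
      _ = M * h ω := mul_comm _ _
  have hi1 : Integrable (fun ω => g ω • f ω) lam :=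
    hbnd g (fun ω => ENNReal.toReal_nonneg) hgm hgi
  have hi2 : Integrable (fun ω => g' ω • f ω) lam :=
    hbnd g' (fun ω => ENNReal.toReal_nonneg) hg'm hg'i
  have hdiff : (fun ω => g ω • f ω - g' ω • f ω) = fun ω => (g ω - g' ω) • f ω := by
    funext ω; rw [sub_smul]
  calc ‖∫ ω, f ω ∂π - ∫ ω, f ω ∂π'‖
      = ‖∫ ω, (g ω - g' ω) • f ω ∂lam‖ := by
        rw [hrw1, hrw2, ← integral_sub hi1 hi2, hdiff]
    _ ≤ ∫ ω, ‖(g ω - g' ω) • f ω‖ ∂lam := norm_integral_le_integral_norm _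
    _ ≤ ∫ ω, M * |g ω - g' ω| ∂lam := by
        have hint3 : Integrable (fun ω => (g ω - g' ω) • f ω) lam := hdiff ▸ (hi1.sub hi2)
        refine integral_mono hint3.norm
          (((hgi.sub hg'i).abs).const_mul M)
          (fun ω => ?_)
        rw [norm_smul, Real.norm_eq_abs]
        calc |g ω - g' ω| * ‖f ω‖ ≤ |g ω - g' ω| * M :=
              mul_le_mul_of_nonneg_left (hM ω) (abs_nonneg _)
          _ = M * |g ω - g' ω| := mul_comm _ _
    _ = 2 * M * tvDist π π' := by
        rw [integral_const_mul, tvDist]; ring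

set_option maxHeartbeats 1000000 in
/-- Quantitative stability of the regression field (core of Theorem 5.2):
there is a constant `K`, depending only on `C_v`, `p_min`, `p_max`, `c`, such
that for any probability measures `π, π̃` with `‖π − π̃‖_TV ≤ ε`, exponents
`G, Ḡ` bounded by `c` with `‖G − Ḡ‖_∞ ≤ η`, density `p ∈ [p_min, p_max]`
with `p_min > 0`, and drift `v` bounded by `C_v`, the ratios
`β = (∫ v p e^G dπ)/(∫ p e^G dπ)` and `β̃ = (∫ v p e^{Ḡ} dπ̃)/(∫ p e^{Ḡ} dπ̃)`
satisfy `‖β − β̃‖ ≤ K (η + ε)`. -/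
theorem regression_field_stability
    (Cv pmin pmax c : ℝ) (hpmin : 0 < pmin) (hpp : pmin ≤ pmax)
    (hc : 0 ≤ c) (hCv : 0 ≤ Cv) :
    ∃ K : ℝ, ∀ (m : ℕ) (Ω : Type) (_ : MeasurableSpace Ω)
      (π π' : Measure Ω),
      IsProbabilityMeasure π → IsProbabilityMeasure π' →
      ∀ (G G' : Ω → ℝ) (p : Ω → ℝ) (v : Ω → EuclideanSpace ℝ (Fin m))
        (ε η : ℝ),
      Measurable G → Measurable G' → Measurable p → Measurable v →
      (∀ ω, |G ω| ≤ c) → (∀ ω, |G' ω| ≤ c) → (∀ ω, |G ω - G' ω| ≤ η) →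
      (∀ ω, pmin ≤ p ω) → (∀ ω, p ω ≤ pmax) → (∀ ω, ‖v ω‖ ≤ Cv) →
      tvDist π π' ≤ ε →
      ‖(∫ ω, p ω * Real.exp (G ω) ∂π)⁻¹
            • (∫ ω, (p ω * Real.exp (G ω)) • v ω ∂π)
          - (∫ ω, p ω * Real.exp (G' ω) ∂π')⁻¹
            • (∫ ω, (p ω * Real.exp (G' ω)) • v ω ∂π')‖
        ≤ K * (η + ε) := by
  set Mb : ℝ := pmax * Real.exp c with hMbdef
  set a : ℝ := pmin * Real.exp (-c) with hadef
  have ha : 0 < a := mul_pos hpmin (Real.exp_pos _)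
  have hMb : 0 < Mb := mul_pos (lt_of_lt_of_le hpmin hpp) (Real.exp_pos _)
  refine ⟨a⁻¹ * (2 * (Mb * Cv)) + a⁻¹ * a⁻¹ * (2 * Mb) * (Mb * Cv), ?_⟩
  intro m Ω _ π π' hπ hπ' G G' p v ε η hG hG' hp hv hGc hG'c hGG' hpl hpu hvb hTV
  -- nonemptiness and sign facts
  have hne : Nonempty Ω := by
    by_contra h
    rw [not_nonempty_iff] at h
    have h1 : π Set.univ = 1 := measure_univ
    rw [Set.univ_eq_empty_iff.mpr h] at h1
    simp at h1
  obtain ⟨ω0⟩ := hne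
  have hη0 : 0 ≤ η := le_trans (abs_nonneg _) (hGG' ω0)
  have hε0 : 0 ≤ ε := by
    refine le_trans ?_ hTV
    exact mul_nonneg (by norm_num) (integral_nonneg fun ω => abs_nonneg _)
  -- pointwise bounds
  have hlow : ∀ (H : Ω → ℝ), (∀ ω, |H ω| ≤ c) → ∀ ω, a ≤ p ω * Real.exp (H ω) := by
    intro H hH ω
    have h1 : Real.exp (-c) ≤ Real.exp (H ω) := Real.exp_le_exp.mpr (neg_le_of_abs_le (hH ω))
    have := hpl ω
    nlinarith [Real.exp_pos (-c)]
  have hup : ∀ (H : Ω → ℝ), (∀ ω, |H ω| ≤ c) → ∀ ω, |p ω * Real.exp (H ω)| ≤ Mb := by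
    intro H hH ω
    have h1 : Real.exp (H ω) ≤ Real.exp c := Real.exp_le_exp.mpr (le_of_abs_le (hH ω))
    have h2 := hpl ω; have h3 := hpu ω
    rw [abs_of_nonneg (mul_nonneg (le_trans hpmin.le (hpl ω)) (Real.exp_pos _).le)]
    nlinarith [Real.exp_pos (H ω)]
  have hupv : ∀ (H : Ω → ℝ), (∀ ω, |H ω| ≤ c) →
      ∀ ω, ‖(p ω * Real.exp (H ω)) • v ω‖ ≤ Mb * Cv := by
    intro H hH ω
    rw [norm_smul, Real.norm_eq_abs]
    exact mul_le_mul (hup H hH ω) (hvb ω) (norm_nonneg _) hMb.le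
  have hηpt : ∀ ω, |p ω * Real.exp (G ω) - p ω * Real.exp (G' ω)| ≤ Mb * η := by
    intro ω
    have h1 : |Real.exp (G ω) - Real.exp (G' ω)| ≤ Real.exp c * |G ω - G' ω| :=
      aux_exp_lip (hGc ω) (hG'c ω)
    have h2 : |p ω * Real.exp (G ω) - p ω * Real.exp (G' ω)|
        = p ω * |Real.exp (G ω) - Real.exp (G' ω)| := by
      rw [← mul_sub, abs_mul, abs_of_nonneg (le_trans hpmin.le (hpl ω))]
    rw [h2, hMbdef]
    have h3 := hpl ω; have h4 := hpu ω; have h5 := hGG' ω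
    nlinarith [abs_nonneg (Real.exp (G ω) - Real.exp (G' ω)), abs_nonneg (G ω - G' ω),
      Real.exp_pos c]
  -- measurability
  have hmG : Measurable fun ω => p ω * Real.exp (G ω) := hp.mul (Real.measurable_exp.comp hG)
  have hmG' : Measurable fun ω => p ω * Real.exp (G' ω) := hp.mul (Real.measurable_exp.comp hG')
  have hmvG : Measurable fun ω => (p ω * Real.exp (G ω)) • v ω := hmG.smul hv
  have hmvG' : Measurable fun ω => (p ω * Real.exp (G' ω)) • v ω := hmG'.smul hv
  -- abbreviations
  set A : ℝ := ∫ ω, p ω * Real.exp (G ω) ∂π with hA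
  set A' : ℝ := ∫ ω, p ω * Real.exp (G' ω) ∂π' with hA'
  set Am : ℝ := ∫ ω, p ω * Real.exp (G' ω) ∂π with hAm
  set B : EuclideanSpace ℝ (Fin m) := ∫ ω, (p ω * Real.exp (G ω)) • v ω ∂π with hB
  set B' : EuclideanSpace ℝ (Fin m) := ∫ ω, (p ω * Real.exp (G' ω)) • v ω ∂π' with hB'
  set Bm : EuclideanSpace ℝ (Fin m) := ∫ ω, (p ω * Real.exp (G' ω)) • v ω ∂π with hBm
  -- integrability
  have hIA : Integrable (fun ω => p ω * Real.exp (G ω)) π :=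
    aux_integrable_bdd π hmG Mb (fun ω => by rw [Real.norm_eq_abs]; exact hup G hGc ω)
  have hIAm : Integrable (fun ω => p ω * Real.exp (G' ω)) π :=
    aux_integrable_bdd π hmG' Mb (fun ω => by rw [Real.norm_eq_abs]; exact hup G' hG'c ω)
  have hIB : Integrable (fun ω => (p ω * Real.exp (G ω)) • v ω) π :=
    aux_integrable_bdd π hmvG (Mb * Cv) (hupv G hGc)
  have hIBm : Integrable (fun ω => (p ω * Real.exp (G' ω)) • v ω) π :=
    aux_integrable_bdd π hmvG' (Mb * Cv) (hupv G' hG'c)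
  -- lower bounds on denominators
  have hAge : a ≤ A := by
    have h := integral_mono (μ := π) (integrable_const a) hIA (hlow G hGc)
    simpa using h
  have hA'ge : a ≤ A' := by
    have h := integral_mono (μ := π') (integrable_const a)
      (aux_integrable_bdd π' hmG' Mb (fun ω => by rw [Real.norm_eq_abs]; exact hup G' hG'c ω))
      (hlow G' hG'c)
    simpa using h
  have hA0 : 0 < A := lt_of_lt_of_le ha hAge
  have hA'0 : 0 < A' := lt_of_lt_of_le ha hA'ge
  -- norm bound on B'
  have hB'le : ‖B'‖ ≤ Mb * Cv := by
    have h := norm_integral_le_of_norm_le_const (μ := π')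
      (Filter.Eventually.of_forall (hupv G' hG'c))
    simpa using h
  -- |A - A'| bound
  have hAdiff : |A - A'| ≤ Mb * η + 2 * Mb * ε := by
    have t1 : |A - Am| ≤ Mb * η := by
      rw [hA, hAm, ← integral_sub hIA hIAm]
      have h := norm_integral_le_of_norm_le_const (μ := π) (C := Mb * η)
        (f := fun ω => p ω * Real.exp (G ω) - p ω * Real.exp (G' ω))
        (Filter.Eventually.of_forall fun ω => by
          rw [Real.norm_eq_abs]; exact hηpt ω)
      rw [Real.norm_eq_abs] at h
      simpa using h
    have t2 : |Am - A'| ≤ 2 * Mb * ε := by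
      have h := aux_tv_bound π π' hmG' Mb hMb.le
        (fun ω => by rw [Real.norm_eq_abs]; exact hup G' hG'c ω)
      rw [Real.norm_eq_abs] at h
      calc |Am - A'| ≤ 2 * Mb * tvDist π π' := h
        _ ≤ 2 * Mb * ε := by nlinarith
    calc |A - A'| ≤ |A - Am| + |Am - A'| := abs_sub_le _ _ _
      _ ≤ Mb * η + 2 * Mb * ε := add_le_add t1 t2
  -- ‖B - B'‖ bound
  have hBdiff : ‖B - B'‖ ≤ Mb * Cv * η + 2 * (Mb * Cv) * ε := by
    have t1 : ‖B - Bm‖ ≤ Mb * Cv * η := by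
      rw [hB, hBm, ← integral_sub hIB hIBm]
      have h := norm_integral_le_of_norm_le_const (μ := π) (C := Mb * Cv * η)
        (f := fun ω => (p ω * Real.exp (G ω)) • v ω - (p ω * Real.exp (G' ω)) • v ω)
        (Filter.Eventually.of_forall fun ω => by
          show ‖(p ω * Real.exp (G ω)) • v ω - (p ω * Real.exp (G' ω)) • v ω‖ ≤ Mb * Cv * η
          rw [← sub_smul, norm_smul, Real.norm_eq_abs]
          have := mul_le_mul (hηpt ω) (hvb ω) (norm_nonneg _)
            (by positivity : (0:ℝ) ≤ Mb * η)
          nlinarith)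
      simpa using h
    have t2 : ‖Bm - B'‖ ≤ 2 * (Mb * Cv) * ε := by
      have h := aux_tv_bound π π' hmvG' (Mb * Cv) (by positivity) (hupv G' hG'c)
      calc ‖Bm - B'‖ ≤ 2 * (Mb * Cv) * tvDist π π' := h
        _ ≤ 2 * (Mb * Cv) * ε :=
          mul_le_mul_of_nonneg_left hTV (by nlinarith [mul_nonneg hMb.le hCv])
    calc ‖B - B'‖ ≤ ‖B - Bm‖ + ‖Bm - B'‖ := norm_sub_le_norm_sub_add_norm_sub _ _ _
      _ ≤ Mb * Cv * η + 2 * (Mb * Cv) * ε := add_le_add t1 t2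
  -- decomposition
  have decomp : A⁻¹ • B - A'⁻¹ • B' = A⁻¹ • (B - B') + (A⁻¹ - A'⁻¹) • B' := by
    rw [smul_sub, sub_smul]; abel
  have hinv : |A⁻¹| ≤ a⁻¹ := by
    rw [abs_of_pos (inv_pos.mpr hA0)]
    exact inv_anti₀ ha hAge
  have hinvdiff : |A⁻¹ - A'⁻¹| ≤ a⁻¹ * a⁻¹ * |A - A'| := by
    rw [inv_sub_inv hA0.ne' hA'0.ne', abs_div, abs_of_pos (mul_pos hA0 hA'0),
      abs_sub_comm A' A]
    calc |A - A'| / (A * A') ≤ |A - A'| / (a * a) :=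
          div_le_div_of_nonneg_left (abs_nonneg _) (mul_pos ha ha)
            (mul_le_mul hAge hA'ge ha.le hA0.le)
      _ = a⁻¹ * a⁻¹ * |A - A'| := by rw [div_eq_mul_inv, mul_inv]; ring
  calc ‖A⁻¹ • B - A'⁻¹ • B'‖
      ≤ ‖A⁻¹ • (B - B')‖ + ‖(A⁻¹ - A'⁻¹) • B'‖ := by rw [decomp]; exact norm_add_le _ _
    _ = |A⁻¹| * ‖B - B'‖ + |A⁻¹ - A'⁻¹| * ‖B'‖ := by
        rw [norm_smul, norm_smul, Real.norm_eq_abs, Real.norm_eq_abs]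
    _ ≤ a⁻¹ * (Mb * Cv * η + 2 * (Mb * Cv) * ε)
        + (a⁻¹ * a⁻¹ * (Mb * η + 2 * Mb * ε)) * (Mb * Cv) := by
        have h3 : (0:ℝ) < a⁻¹ := inv_pos.mpr ha
        refine add_le_add (mul_le_mul hinv hBdiff (norm_nonneg _) h3.le) ?_
        refine mul_le_mul ?_ hB'le (norm_nonneg _) (by positivity)
        calc |A⁻¹ - A'⁻¹| ≤ a⁻¹ * a⁻¹ * |A - A'| := hinvdiff
          _ ≤ a⁻¹ * a⁻¹ * (Mb * η + 2 * Mb * ε) := by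
              exact mul_le_mul_of_nonneg_left hAdiff (by positivity)
    _ ≤ (a⁻¹ * (2 * (Mb * Cv)) + a⁻¹ * a⁻¹ * (2 * Mb) * (Mb * Cv)) * (η + ε) := by
        have h3 : (0:ℝ) < a⁻¹ := inv_pos.mpr ha
        have e1 : 0 ≤ a⁻¹ * Mb * Cv * η :=
          mul_nonneg (mul_nonneg (mul_nonneg h3.le hMb.le) hCv) hη0
        have e2 : 0 ≤ a⁻¹ * a⁻¹ * Mb * Mb * Cv * η :=
          mul_nonneg (mul_nonneg (mul_nonneg (mul_nonneg (mul_nonneg h3.le h3.le) hMb.le)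
            hMb.le) hCv) hη0
        have expand : (a⁻¹ * (2 * (Mb * Cv)) + a⁻¹ * a⁻¹ * (2 * Mb) * (Mb * Cv)) * (η + ε)
            = a⁻¹ * (Mb * Cv * η + 2 * (Mb * Cv) * ε)
              + (a⁻¹ * a⁻¹ * (Mb * η + 2 * Mb * ε)) * (Mb * Cv)
              + (a⁻¹ * Mb * Cv * η + a⁻¹ * a⁻¹ * Mb * Mb * Cv * η) := by ring
        rw [expand]
        linarith
end

section
/- Let (Ω, μ) be a finite measure space with μ ≠ 0, let g : [0,1] × Ω → ℝ be measurable, bounded by a constant M, and such that t ↦ g(t, ω) is continuous for each ω, and let v : Ω → ℝ be bounded measurable. Define w_t(ω) := exp(∫₀ᵗ g(r, ω) dr), the normalized measures π_t := (w_t / ∫ w_t dμ) μ, and β(t) := ∫ v w_t dμ / ∫ w_t dμ. Then t ↦ β(t) is differentiable on (0,1) and for every t, β'(t) = ∫ v g(t, ·) dπ_t − (∫ v dπ_t)(∫ g(t, ·) dπ_t), i.e. the derivative equals the covariance of v and g(t, ·) under π_t. -/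
open MeasureTheory

/-- The exponential tilt weight `w_t(ω) = exp(∫₀ᵗ g(r, ω) dr)`. -/
noncomputable def tiltWeight {Ω : Type*} (g : ℝ → Ω → ℝ) (t : ℝ) (ω : Ω) : ℝ :=
  Real.exp (∫ r in (0:ℝ)..t, g r ω)

/-- The normalized tilted measure `π_t = (w_t / ∫ w_t dμ) μ`. -/
noncomputable def tiltedMeasure {Ω : Type*} [MeasurableSpace Ω]
    (μ : Measure Ω) (g : ℝ → Ω → ℝ) (t : ℝ) : Measure Ω :=
  μ.withDensity fun ω =>
    ENNReal.ofReal (tiltWeight g t ω / ∫ ω', tiltWeight g t ω' ∂μ)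

/-!
By the fundamental theorem of calculus `∂_τ w_τ = g(τ, ·) w_τ`, and `|g| ≤ M`, `w_τ ≤ e^M`
dominate these derivatives uniformly in `τ`, so `N(τ) = ∫ v w_τ dμ` and `D(τ) = ∫ w_τ dμ` can be
differentiated under the integral sign: `N' = ∫ v g w dμ`, `D' = ∫ g w dμ`. Since `w > 0` and
`μ ≠ 0`, `D > 0`, and the quotient rule gives `(N/D)' = N'/D - (N/D)(D'/D)`, each ratio being an
integral against `π_t`.
-/

open Set

section TiltWeight

variable {Ω : Type*}

lemma tiltWeight_pos (g : ℝ → Ω → ℝ) (t : ℝ) (ω : Ω) : 0 < tiltWeight g t ω :=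
  Real.exp_pos _

variable {g : ℝ → Ω → ℝ} {M : ℝ}

lemma abs_intervalIntegral_le_of_abs_le (hgb : ∀ t ∈ Icc (0:ℝ) 1, ∀ ω, |g t ω| ≤ M)
    {t : ℝ} (ht : t ∈ Icc (0:ℝ) 1) (ω : Ω) :
    |∫ r in (0:ℝ)..t, g r ω| ≤ M := by
  have hM : 0 ≤ M := (abs_nonneg _).trans (hgb 0 ⟨le_rfl, zero_le_one⟩ ω)
  have hbound : ∀ r ∈ uIoc (0:ℝ) t, ‖g r ω‖ ≤ M := by
    intro r hr
    rw [uIoc_of_le ht.1] at hr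
    exact hgb r ⟨hr.1.le, hr.2.trans ht.2⟩ ω
  calc |∫ r in (0:ℝ)..t, g r ω| ≤ M * |t - 0| :=
        intervalIntegral.norm_integral_le_of_norm_le_const hbound
    _ ≤ M := by
        rw [sub_zero, abs_of_nonneg ht.1]
        exact mul_le_of_le_one_right hM ht.2

lemma tiltWeight_le_exp (hgb : ∀ t ∈ Icc (0:ℝ) 1, ∀ ω, |g t ω| ≤ M)
    {t : ℝ} (ht : t ∈ Icc (0:ℝ) 1) (ω : Ω) :
    tiltWeight g t ω ≤ Real.exp M :=
  Real.exp_le_exp.2 ((le_abs_self _).trans (abs_intervalIntegral_le_of_abs_le hgb ht ω))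

lemma hasDerivAt_tiltWeight {ω : Ω} (hgc : ContinuousOn (fun t => g t ω) (Icc (0:ℝ) 1))
    {t : ℝ} (ht : t ∈ Ioo (0:ℝ) 1) :
    HasDerivAt (fun τ => tiltWeight g τ ω) (g t ω * tiltWeight g t ω) t := by
  have hIcc : Icc (0:ℝ) 1 ∈ nhds t := Icc_mem_nhds ht.1 ht.2
  have hint : IntervalIntegrable (fun r => g r ω) volume 0 t :=
    (hgc.mono <| by
      rw [uIcc_of_le ht.1.le]; exact Icc_subset_Icc le_rfl ht.2.le).intervalIntegrable
  have hexponent : HasDerivAt (fun τ => ∫ r in (0:ℝ)..τ, g r ω) (g t ω) t :=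
    intervalIntegral.integral_hasDerivAt_right hint
      ⟨Icc 0 1, hIcc, hgc.aestronglyMeasurable measurableSet_Icc⟩ (hgc.continuousAt hIcc)
  simpa only [tiltWeight, mul_comm] using hexponent.exp

variable [MeasurableSpace Ω]

lemma measurable_tiltWeight (hgm : Measurable (Function.uncurry g)) (t : ℝ) :
    Measurable (tiltWeight g t) := by
  have hIoc : ∀ a b : ℝ, Measurable fun ω => ∫ r in Ioc a b, g r ω := fun a b =>
    (hgm.comp measurable_swap).stronglyMeasurable.integral_prod_right'.measurable
  exact Real.measurable_exp.comp ((hIoc 0 t).sub (hIoc t 0))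

lemma MeasureTheory.Integrable.mul_tiltWeight {μ : Measure Ω} {f : Ω → ℝ}
    (hf : Integrable f μ)
    (hgm : Measurable (Function.uncurry g)) (hgb : ∀ t ∈ Icc (0:ℝ) 1, ∀ ω, |g t ω| ≤ M)
    {t : ℝ} (ht : t ∈ Icc (0:ℝ) 1) :
    Integrable (fun ω => f ω * tiltWeight g t ω) μ :=
  hf.mul_bdd (measurable_tiltWeight hgm t).aestronglyMeasurable <|
    Filter.Eventually.of_forall fun ω => by
      rw [Real.norm_of_nonneg (tiltWeight_pos g t ω).le]
      exact tiltWeight_le_exp hgb ht ω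

lemma hasDerivAt_integral_mul_tiltWeight {μ : Measure Ω} {f : Ω → ℝ} (hf : Integrable f μ)
    (hgm : Measurable (Function.uncurry g)) (hgb : ∀ t ∈ Icc (0:ℝ) 1, ∀ ω, |g t ω| ≤ M)
    (hgc : ∀ ω, ContinuousOn (fun t => g t ω) (Icc (0:ℝ) 1))
    {t : ℝ} (ht : t ∈ Ioo (0:ℝ) 1) :
    HasDerivAt (fun τ => ∫ ω, f ω * tiltWeight g τ ω ∂μ)
      (∫ ω, f ω * g t ω * tiltWeight g t ω ∂μ) t := by
  have hgt : Measurable (g t) := hgm.comp (measurable_const.prodMk measurable_id)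
  have hbound : ∀ ω, ∀ τ ∈ Ioo (0:ℝ) 1,
      ‖f ω * g τ ω * tiltWeight g τ ω‖ ≤ ‖f ω‖ * M * Real.exp M := by
    intro ω τ hτ
    have hτ' := mem_Icc_of_Ioo hτ
    have hM : 0 ≤ M := (abs_nonneg _).trans (hgb τ hτ' ω)
    rw [norm_mul, norm_mul, Real.norm_of_nonneg (tiltWeight_pos g τ ω).le]
    exact mul_le_mul (mul_le_mul_of_nonneg_left (hgb τ hτ' ω) (norm_nonneg _))
      (tiltWeight_le_exp hgb hτ' ω) (tiltWeight_pos g τ ω).le (mul_nonneg (norm_nonneg _) hM)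
  refine (hasDerivAt_integral_of_dominated_loc_of_deriv_le
    (F := fun τ ω => f ω * tiltWeight g τ ω) (Ioo_mem_nhds ht.1 ht.2)
    (Filter.Eventually.of_forall fun τ =>
      hf.aestronglyMeasurable.mul (measurable_tiltWeight hgm τ).aestronglyMeasurable)
    (hf.mul_tiltWeight hgm hgb (mem_Icc_of_Ioo ht))
    ((hf.aestronglyMeasurable.mul hgt.aestronglyMeasurable).mul
      (measurable_tiltWeight hgm t).aestronglyMeasurable)
    (Filter.Eventually.of_forall hbound) ((hf.norm.mul_const M).mul_const _)
    (Filter.Eventually.of_forall fun ω τ hτ => ?_)).2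
  simpa only [mul_assoc] using (hasDerivAt_tiltWeight (hgc ω) hτ).const_mul (f ω)

lemma integral_tiltedMeasure (μ : Measure Ω) (hgm : Measurable (Function.uncurry g)) (t : ℝ)
    (h : Ω → ℝ) :
    ∫ ω, h ω ∂(tiltedMeasure μ g t)
      = (∫ ω, h ω * tiltWeight g t ω ∂μ) / ∫ ω, tiltWeight g t ω ∂μ := by
  have hD : 0 ≤ ∫ ω, tiltWeight g t ω ∂μ := integral_nonneg fun ω => (tiltWeight_pos g t ω).le
  rw [tiltedMeasure, integral_withDensity_eq_integral_toReal_smul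
    ((measurable_tiltWeight hgm t).div_const _).ennreal_ofReal
    (Filter.Eventually.of_forall fun _ => ENNReal.ofReal_lt_top), ← integral_div]
  congr 1 with ω
  rw [ENNReal.toReal_ofReal (div_nonneg (tiltWeight_pos g t ω).le hD), smul_eq_mul]
  ring

lemma integral_tiltWeight_pos {μ : Measure Ω} [IsFiniteMeasure μ] (hμ : μ ≠ 0)
    (hgm : Measurable (Function.uncurry g)) (hgb : ∀ t ∈ Icc (0:ℝ) 1, ∀ ω, |g t ω| ≤ M)
    {t : ℝ} (ht : t ∈ Icc (0:ℝ) 1) :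
    0 < ∫ ω, tiltWeight g t ω ∂μ := by
  have hint : Integrable (tiltWeight g t) μ := by
    simpa only [one_mul] using (integrable_const (μ := μ) (1:ℝ)).mul_tiltWeight hgm hgb ht
  rw [integral_pos_iff_support_of_nonneg (fun ω => (tiltWeight_pos g t ω).le) hint,
    Function.support_eq_univ fun ω => (tiltWeight_pos g t ω).ne']
  exact Measure.measure_univ_pos.2 hμ

end TiltWeight

/-- Covariance evolution of the tilted regression target: with
`β(t) = (∫ v w_t dμ)/(∫ w_t dμ)`, the map `t ↦ β(t)` is differentiable on
`(0,1)` with derivative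
`β'(t) = ∫ v g(t,·) dπ_t − (∫ v dπ_t)(∫ g(t,·) dπ_t)`, i.e. the covariance of
`v` and `g(t,·)` under the normalized tilted measure `π_t`. -/
theorem tilted_field_covariance_ode
    {Ω : Type*} [MeasurableSpace Ω]
    (μ : Measure Ω) [IsFiniteMeasure μ] (hμ : μ ≠ 0)
    (g : ℝ → Ω → ℝ) (hgm : Measurable (Function.uncurry g))
    (M : ℝ) (hgb : ∀ t ∈ Set.Icc (0:ℝ) 1, ∀ ω, |g t ω| ≤ M)
    (hgc : ∀ ω, ContinuousOn (fun t => g t ω) (Set.Icc (0:ℝ) 1))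
    (v : Ω → ℝ) (hvm : Measurable v) (Cv : ℝ) (hvb : ∀ ω, |v ω| ≤ Cv) :
    ∀ t ∈ Set.Ioo (0:ℝ) 1,
      HasDerivAt
        (fun τ => (∫ ω, v ω * tiltWeight g τ ω ∂μ)
          / ∫ ω, tiltWeight g τ ω ∂μ)
        ((∫ ω, v ω * g t ω ∂(tiltedMeasure μ g t))
          - (∫ ω, v ω ∂(tiltedMeasure μ g t))
            * ∫ ω, g t ω ∂(tiltedMeasure μ g t)) t := by
  intro t ht
  have hv : Integrable v μ := .of_bound hvm.aestronglyMeasurable Cv (.of_forall hvb)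
  have hnum := hasDerivAt_integral_mul_tiltWeight hv hgm hgb hgc ht
  have hden :=
    hasDerivAt_integral_mul_tiltWeight (integrable_const (μ := μ) (1:ℝ)) hgm hgb hgc ht
  simp only [one_mul] at hden
  have hpos := integral_tiltWeight_pos hμ hgm hgb (mem_Icc_of_Ioo ht)
  refine (hnum.div hden hpos.ne').congr_deriv ?_
  simp only [integral_tiltedMeasure μ hgm t]
  field_simp
end
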